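/- arXiv:2605.09583 — 9 statements merged into one kernel-verified Lean document; each statement's English description precedes it below -/
import Mathlib

section
/- A nontrivial proper subalgebra A of a finite-dimensional Lie algebra L is an isolated vertex of the comaximal graph Γ(L) if and only if A is contained in the Frattini subalgebra F(L) of L. -/
open Module

/-- A nontrivial proper subalgebra `A` of a finite-dimensional Lie algebra `L` is an
isolated vertex of the comaximal graph `Γ(L)` (i.e. `⟨A,B⟩ ≠ L` for every other
nontrivial proper subalgebra `B`) iff `A` is contained in the Frattini subalgebra
(the infimum of all maximal subalgebras). -/
theorem isolated_iff_le_frattini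
    (F : Type*) [Field F] (L : Type*) [LieRing L] [LieAlgebra F L]
    [FiniteDimensional F L]
    (A : LieSubalgebra F L) (hA₁ : A ≠ ⊥) (hA₂ : A ≠ ⊤) :
    (∀ B : LieSubalgebra F L, B ≠ ⊥ → B ≠ ⊤ → B ≠ A → A ⊔ B ≠ ⊤) ↔
      A ≤ sInf {M : LieSubalgebra F L | IsCoatom M} := by
  have hcoatomic : IsCoatomic (LieSubalgebra F L) :=
    isCoatomic_of_orderTop_gt_wellFounded
      (IsWellFounded.wf : WellFounded ((· > ·) : LieSubalgebra F L → _ → Prop))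
  constructor
  · intro h
    rw [le_sInf_iff]
    intro M hM
    by_contra hAM
    have hMtop : M ≠ ⊤ := hM.1
    have hMbot : M ≠ ⊥ := by
      rintro rfl
      exact hA₂ (hM.2 A (bot_lt_iff_ne_bot.mpr hA₁))
    have hMA : M ≠ A := by
      rintro rfl
      exact hAM le_rfl
    refine h M hMbot hMtop hMA ?_
    have hlt : M < A ⊔ M := lt_of_le_of_ne le_sup_right (by
      intro hEq
      exact hAM (hEq ▸ le_sup_left))
    exact hM.2 _ hlt
  · intro h B _ hBtop _ hAB
    rcases (hcoatomic.eq_top_or_exists_le_coatom B) with h' | ⟨M, hM, hBM⟩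
    · exact hBtop h'
    · have hAM : A ≤ M := (le_sInf_iff.mp h) M hM
      have : (⊤ : LieSubalgebra F L) ≤ M := hAB ▸ sup_le hAM hBM
      exact hM.1 (top_le_iff.mp this)
end

section
/- The comaximal graph Γ(L) of a finite-dimensional Lie algebra L is a complete graph if and only if every proper nonzero subalgebra of L is one-dimensional. -/
open Module

namespace LieSubalgebra

variable {F L : Type*} [Field F] [LieRing L] [LieAlgebra F L]

theorem finrank_lieSpan_singleton {x : L} (hx : x ≠ 0) :
    finrank F (lieSpan F L {x}) = 1 := by
  change finrank F (lieSpan F L {x} : Submodule F L) = 1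
  rw [coe_lieSpan_eq_span_of_forall_lie_eq_zero (by simp)]
  exact finrank_span_singleton hx

theorem exists_le_finrank_eq_one {S : LieSubalgebra F L} (hS : S ≠ ⊥) :
    ∃ T ≤ S, finrank F T = 1 := by
  obtain ⟨x, hxS, hx⟩ := Submodule.exists_mem_ne_zero_of_ne_bot
    (mt (toSubmodule_eq_bot S).mp hS)
  exact ⟨lieSpan F L {x}, lieSpan_le.mpr (Set.singleton_subset_iff.mpr hxS),
    finrank_lieSpan_singleton hx⟩

theorem ne_bot_of_finrank_eq_one {T : LieSubalgebra F L} (hT : finrank F T = 1) : T ≠ ⊥ := by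
  rintro rfl
  change finrank F (⊥ : LieSubalgebra F L).toSubmodule = 1 at hT
  simp at hT

theorem eq_of_le_of_finrank_eq_one {A B : LieSubalgebra F L} (hAB : A ≤ B)
    (hA : finrank F A = 1) (hB : finrank F B = 1) : A = B := by
  have : FiniteDimensional F B := Module.finite_of_finrank_eq_succ hB
  exact toSubmodule_injective (Submodule.eq_of_le_of_finrank_eq hAB (hA.trans hB.symm))

end LieSubalgebra

open LieSubalgebra in
theorem comaximal_complete_iff_every_proper_one_dimensional_general
    (F : Type*) [Field F] (L : Type*) [LieRing L] [LieAlgebra F L] :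
    (∀ A B : LieSubalgebra F L, A ≠ ⊥ → A ≠ ⊤ → B ≠ ⊥ → B ≠ ⊤ → A ≠ B →
        A ⊔ B = ⊤) ↔
      (∀ S : LieSubalgebra F L, S ≠ ⊥ → S ≠ ⊤ → finrank F S = 1) := by
  constructor
  · intro h S hS0 hST
    obtain ⟨T, hTS, hT⟩ := exists_le_finrank_eq_one hS0
    obtain rfl | hne := eq_or_ne T S
    · exact hT
    · have hsup_top := h S T hS0 hST (ne_bot_of_finrank_eq_one hT)
        (ne_top_of_le_ne_top hST hTS) hne.symm
      exact absurd (sup_eq_left.mpr hTS ▸ hsup_top) hST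
  · intro h A B hA0 hAT hB0 hBT hAB
    by_contra hsup
    have hsup1 := h (A ⊔ B) (ne_bot_of_le_ne_bot hA0 le_sup_left) hsup
    exact hAB <| (eq_of_le_of_finrank_eq_one le_sup_left (h A hA0 hAT) hsup1).trans
      (eq_of_le_of_finrank_eq_one le_sup_right (h B hB0 hBT) hsup1).symm

/-- The comaximal graph `Γ(L)` of a finite-dimensional Lie algebra `L` is complete
(every two distinct nontrivial proper subalgebras generate `L`) iff every nonzero
proper subalgebra of `L` is one-dimensional. -/
theorem comaximal_complete_iff_every_proper_one_dimensional
    (F : Type*) [Field F] (L : Type*) [LieRing L] [LieAlgebra F L]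
    [FiniteDimensional F L] :
    (∀ A B : LieSubalgebra F L, A ≠ ⊥ → A ≠ ⊤ → B ≠ ⊥ → B ≠ ⊤ → A ≠ B →
        A ⊔ B = ⊤) ↔
      (∀ S : LieSubalgebra F L, S ≠ ⊥ → S ≠ ⊤ → finrank F S = 1) :=
  comaximal_complete_iff_every_proper_one_dimensional_general F L
end

section
/- Let L be a finite-dimensional Lie algebra with dim L ≥ 2 over a field F. Then the induced subgraph of the comaximal graph Γ(L) obtained by deleting all vertices contained in the Frattini subalgebra F(L) is connected with diameter at most 3. In particular, if F(L) = 0, then Γ(L) is connected of diameter at most 3. -/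
open Module

/-! Distinct maximal subalgebras are comaximal, so they form a clique of `Γ(L)`; a subalgebra
not contained in `F(L)` misses some maximal subalgebra and is therefore adjacent to it. Any two
vertices are thus joined through the clique by a walk of length at most three. Maximal
subalgebras are nonzero, hence vertices, because every line `F x` is a proper subalgebra. -/

/-- The comaximal graph of a Lie algebra, restricted to the subalgebras
satisfying a predicate `P` (among the nontrivial proper ones). -/
def comaximalGraphOn (F : Type*) [Field F] (L : Type*) [LieRing L] [LieAlgebra F L]
    (P : LieSubalgebra F L → Prop) :
    SimpleGraph {A : LieSubalgebra F L // A ≠ ⊥ ∧ A ≠ ⊤ ∧ P A} where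
  Adj A B := A ≠ B ∧ (A.val ⊔ B.val = ⊤)
  symm := by
    constructor
    rintro A B ⟨h₁, h₂⟩
    exact ⟨h₁.symm, by rw [sup_comm]; exact h₂⟩
  loopless := ⟨fun A => by rintro ⟨h, -⟩; exact h rfl⟩

namespace SimpleGraph

variable {V : Type*} {G : SimpleGraph V} {S : Set V}

theorem exists_walk_length_le_three_of_isClique_of_forall_exists_adj (hS : G.IsClique S)
    (hdom : ∀ v, ∃ s ∈ S, G.Adj v s) (u v : V) : ∃ p : G.Walk u v, p.length ≤ 3 := by
  rcases eq_or_ne u v with rfl | huv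
  · exact ⟨.nil, by simp⟩
  obtain ⟨s, hs, hus⟩ := hdom u
  obtain ⟨t, ht, hvt⟩ := hdom v
  rcases eq_or_ne s t with rfl | hst
  · exact ⟨hus.toWalk.append hvt.symm.toWalk, by simp⟩
  · exact ⟨hus.toWalk.append ((hS hs ht hst).toWalk.append hvt.symm.toWalk), by simp⟩

theorem connected_and_dist_le_three_of_isClique_of_forall_exists_adj [Nonempty V]
    (hS : G.IsClique S) (hdom : ∀ v, ∃ s ∈ S, G.Adj v s) :
    G.Connected ∧ ∀ u v, G.dist u v ≤ 3 := by
  have hwalk := exists_walk_length_le_three_of_isClique_of_forall_exists_adj hS hdom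
  refine ⟨.mk fun u v => (hwalk u v).choose.reachable, fun u v => ?_⟩
  obtain ⟨p, hp⟩ := hwalk u v
  exact (dist_le p).trans hp

end SimpleGraph

namespace LieSubalgebra

variable {F : Type*} [Field F] {L : Type*} [LieRing L] [LieAlgebra F L]

variable (F L) in
def frattini : LieSubalgebra F L := sInf {M | IsCoatom M}

theorem exists_isCoatom_not_le_of_not_le_frattini {A : LieSubalgebra F L}
    (hA : ¬ A ≤ frattini F L) : ∃ M, IsCoatom M ∧ ¬ A ≤ M := by
  by_contra! h
  exact hA (le_sInf h)

theorem lieSpan_singleton_ne_top (hdim : 2 ≤ finrank F L) (x : L) :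
    lieSpan F L {x} ≠ ⊤ := by
  rw [ne_eq, ← toSubmodule_inj, coe_lieSpan_eq_span_of_forall_lie_eq_zero (by simp),
    top_toSubmodule]
  exact (span_lt_top_of_card_lt_finrank (by simp; omega)).ne

theorem ne_bot_of_isCoatom (hdim : 2 ≤ finrank F L) {M : LieSubalgebra F L}
    (hM : IsCoatom M) : M ≠ ⊥ := by
  rintro rfl
  have : Nontrivial L := Module.nontrivial_of_finrank_pos (R := F) (by omega)
  obtain ⟨x, hx⟩ := exists_ne (0 : L)
  have hspan := (hM.le_iff.mp bot_le).resolve_left (lieSpan_singleton_ne_top hdim x)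
  have hxbot : x ∈ (⊥ : LieSubalgebra F L) := hspan ▸ subset_lieSpan rfl
  exact hx ((mem_bot x).mp hxbot)

theorem not_le_frattini_of_isCoatom (hdim : 2 ≤ finrank F L) {M : LieSubalgebra F L}
    (hM : IsCoatom M) : ¬ M ≤ frattini F L := by
  have : FiniteDimensional F L := Module.finite_of_finrank_pos (by omega)
  intro hMΦ
  obtain ⟨x, -, hxM⟩ := SetLike.exists_of_lt hM.lt_top
  obtain ⟨N, hN, hxN⟩ := (eq_top_or_exists_le_coatom _).resolve_left
    (lieSpan_singleton_ne_top hdim x)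
  have hNM : N = M := (hM.le_iff_eq hN.ne_top).mp (hMΦ.trans (sInf_le hN))
  exact hxM (hNM ▸ hxN (subset_lieSpan rfl))

end LieSubalgebra

open LieSubalgebra in
theorem comaximalGraphOn_connected_and_dist_le_three {F : Type*} [Field F] {L : Type*}
    [LieRing L] [LieAlgebra F L] (hdim : 2 ≤ finrank F L)
    (P : LieSubalgebra F L → Prop) (hP : ∀ M, IsCoatom M → P M)
    (hfrattini : ∀ A, A ≠ ⊥ → P A → ¬ A ≤ frattini F L) :
    (comaximalGraphOn F L P).Connected ∧ ∀ u v, (comaximalGraphOn F L P).dist u v ≤ 3 := by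
  have : FiniteDimensional F L := Module.finite_of_finrank_pos (by omega)
  let vertex (M : LieSubalgebra F L) (hM : IsCoatom M) :
      {A : LieSubalgebra F L // A ≠ ⊥ ∧ A ≠ ⊤ ∧ P A} :=
    ⟨M, ne_bot_of_isCoatom hdim hM, hM.ne_top, hP M hM⟩
  obtain ⟨M₀, hM₀, -⟩ := (eq_top_or_exists_le_coatom _).resolve_left
    (lieSpan_singleton_ne_top hdim 0)
  have : Nonempty {A : LieSubalgebra F L // A ≠ ⊥ ∧ A ≠ ⊤ ∧ P A} := ⟨vertex M₀ hM₀⟩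
  refine SimpleGraph.connected_and_dist_le_three_of_isClique_of_forall_exists_adj
    (S := {u | IsCoatom u.val}) ?clique ?dominating
  case clique =>
    exact fun u hu v hv huv => ⟨huv, hu.sup_eq_top_of_ne hv (Subtype.coe_ne_coe.mpr huv)⟩
  case dominating =>
    intro u
    obtain ⟨M, hM, huM⟩ :=
      exists_isCoatom_not_le_of_not_le_frattini (hfrattini u.val u.2.1 u.2.2.2)
    refine ⟨vertex M hM, hM, fun h => huM (h ▸ le_rfl), ?_⟩
    rw [sup_comm]
    exact codisjoint_iff.mp (hM.not_le_iff_codisjoint.mp huM)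

theorem comaximal_graph_del_frattini_connected_diam_le_three_general
    (F : Type*) [Field F] (L : Type*) [LieRing L] [LieAlgebra F L]
    (hdim : 2 ≤ finrank F L) :
    ((comaximalGraphOn F L
        (fun A => ¬ A ≤ sInf {M : LieSubalgebra F L | IsCoatom M})).Connected ∧
      ∀ u v, (comaximalGraphOn F L
        (fun A => ¬ A ≤ sInf {M : LieSubalgebra F L | IsCoatom M})).dist u v ≤ 3) ∧
    (sInf {M : LieSubalgebra F L | IsCoatom M} = ⊥ →
      (comaximalGraphOn F L (fun _ => True)).Connected ∧
        ∀ u v, (comaximalGraphOn F L (fun _ => True)).dist u v ≤ 3) := by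
  refine ⟨comaximalGraphOn_connected_and_dist_le_three hdim _
    (fun _ hM => LieSubalgebra.not_le_frattini_of_isCoatom hdim hM) (fun _ _ hA => hA), ?_⟩
  intro hΦ
  exact comaximalGraphOn_connected_and_dist_le_three hdim _ (fun _ _ => trivial)
    fun A hA _ => by rwa [LieSubalgebra.frattini, hΦ, le_bot_iff]

/-- If `dim L ≥ 2`, the induced subgraph of the comaximal graph `Γ(L)` on the
vertices not contained in the Frattini subalgebra is connected of diameter at
most 3; in particular if the Frattini subalgebra is trivial then `Γ(L)` itself
is connected of diameter at most 3. -/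
theorem comaximal_graph_del_frattini_connected_diam_le_three
    (F : Type*) [Field F] (L : Type*) [LieRing L] [LieAlgebra F L]
    [FiniteDimensional F L] (hdim : 2 ≤ finrank F L) :
    ((comaximalGraphOn F L
        (fun A => ¬ A ≤ sInf {M : LieSubalgebra F L | IsCoatom M})).Connected ∧
      ∀ u v, (comaximalGraphOn F L
        (fun A => ¬ A ≤ sInf {M : LieSubalgebra F L | IsCoatom M})).dist u v ≤ 3) ∧
    (sInf {M : LieSubalgebra F L | IsCoatom M} = ⊥ →
      (comaximalGraphOn F L (fun _ => True)).Connected ∧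
        ∀ u v, (comaximalGraphOn F L (fun _ => True)).dist u v ≤ 3) :=
  comaximal_graph_del_frattini_connected_diam_le_three_general F L hdim
end

section
/- In the comaximal graph of the Heisenberg Lie algebra over F_q, the center Z = span(h) is an isolated vertex, and the induced subgraph on the noncentral one-dimensional subalgebras is the complete multipartite graph with q+1 parts of size q. -/
open Module
open scoped LinearAlgebra.Projectivization

/-!
Every bracket lies in `F ∙ h` and `h` is central, so every subspace containing `h` is a
subalgebra. Conversely, a subalgebra `B` with `B + F h = H` contains `h`: writing
`e = b + s h` and `f = b' + t h` with `b, b' ∈ B` gives `h = ⁅e, f⁆ = ⁅b, b'⁆ ∈ B`. Hence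
`Z ⊔ B` is proper for every proper `B`, and the planes of `H` are exactly the planes through
`h`, i.e. the `q + 1` lines of `H ⧸ F h`. Lines are always subalgebras, so a plane contains
`q + 1` of them, one being `Z`; and two distinct lines generate either `H` or a plane.
-/

theorem lie_mem_of_mem_span {R L : Type*} [CommRing R] [LieRing L] [LieAlgebra R L]
    {s t : Set L} {p : Submodule R L} (hst : ∀ x ∈ s, ∀ y ∈ t, ⁅x, y⁆ ∈ p) {x y : L}
    (hx : x ∈ Submodule.span R s) (hy : y ∈ Submodule.span R t) : ⁅x, y⁆ ∈ p := by
  induction hx, hy using Submodule.span_induction₂ with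
  | mem_mem x y hx hy => exact hst x hx y hy
  | zero_left => simp
  | zero_right => simp
  | add_left _ _ _ _ _ _ h₁ h₂ => rw [add_lie]; exact add_mem h₁ h₂
  | add_right _ _ _ _ _ _ h₁ h₂ => rw [lie_add]; exact add_mem h₁ h₂
  | smul_left _ _ _ _ _ h => rw [smul_lie]; exact p.smul_mem _ h
  | smul_right _ _ _ _ _ h => rw [lie_smul]; exact p.smul_mem _ h

namespace Submodule

variable {K V : Type*} [Field K] [AddCommGroup V] [Module K V]

theorem finrank_sup_eq_two {p q : Submodule K V} (hp : finrank K p = 1) (hq : finrank K q = 1)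
    (hpq : p ≠ q) : finrank K ↥(p ⊔ q) = 2 := by
  have := Module.finite_of_finrank_eq_succ hp
  have := Module.finite_of_finrank_eq_succ hq
  have hinf : finrank K ↥(p ⊓ q) = 0 := by
    by_contra hne
    have hle : finrank K p ≤ finrank K ↥(p ⊓ q) := by omega
    exact hpq ((eq_of_le_of_finrank_le inf_le_left hle).symm.trans
      (eq_of_le_of_finrank_le inf_le_right (hq ▸ hp ▸ hle)))
  have := finrank_sup_add_finrank_inf_eq p q
  omega

theorem card_finrank_eq_one_le (P : Submodule K V) :
    Nat.card {W : Submodule K V // finrank K W = 1 ∧ W ≤ P} = Nat.card (ℙ K P) := by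
  rw [Nat.card_congr (Projectivization.equivSubmodule K P)]
  refine Nat.card_congr
    { toFun := fun W => ⟨W.1.comap P.subtype, ?_⟩
      invFun := fun U =>
        ⟨U.1.map P.subtype, by rw [finrank_map_subtype_eq, U.2], map_subtype_le P _⟩
      left_inv := fun W => Subtype.ext ?_
      right_inv := fun U => Subtype.ext (comap_map_eq_of_injective P.injective_subtype U) }
  · rw [← finrank_map_subtype_eq, map_comap_subtype, inf_of_le_right W.2.2, W.2.1]
  · simp only [map_comap_subtype, inf_of_le_right W.2.2]

theorem card_finrank_eq_one_le_ne [Finite K] {P W₀ : Submodule K V} (hP : finrank K P = 2)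
    (hW₀ : finrank K W₀ = 1) (hW₀P : W₀ ≤ P) :
    Nat.card {W : Submodule K V // finrank K W = 1 ∧ W ≠ W₀ ∧ W ≤ P} = Nat.card K := by
  set S := {W : Submodule K V | finrank K W = 1 ∧ W ≤ P}
  have hS : S.ncard = Nat.card K + 1 := by
    rw [← Nat.card_coe_set_eq, ← Projectivization.card_of_finrank_two K P hP,
      ← card_finrank_eq_one_le]
    rfl
  have hW₀S : W₀ ∈ S := ⟨hW₀, hW₀P⟩
  have hdiff : {W : Submodule K V | finrank K W = 1 ∧ W ≠ W₀ ∧ W ≤ P} = S \ {W₀} := by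
    ext W
    simp only [S, Set.mem_ofPred_eq, Set.mem_sdiff, Set.mem_singleton_iff]
    tauto
  rw [← Set.coe_ofPred, Nat.card_coe_set_eq, hdiff, Set.ncard_sdiff_singleton_of_mem hW₀S, hS,
    Nat.add_sub_cancel]

variable [FiniteDimensional K V]

theorem finrank_comap_mkQ (p : Submodule K V) (U : Submodule K (V ⧸ p)) :
    finrank K (U.comap p.mkQ) = finrank K U + finrank K p := by
  have h := LinearMap.finrank_range_add_finrank_ker (p.mkQ.domRestrict (U.comap p.mkQ))
  rwa [LinearMap.range_domRestrict, map_comap_eq_of_surjective p.mkQ_surjective,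
    LinearMap.ker_domRestrict, ker_mkQ,
    (comapSubtypeEquivOfLe (le_comap_mkQ p U)).finrank_eq, eq_comm] at h

theorem card_finrank_eq_add_of_le (p : Submodule K V) (n : ℕ) :
    Nat.card {W : Submodule K V // finrank K W = n + finrank K p ∧ p ≤ W} =
      Nat.card {U : Submodule K (V ⧸ p) // finrank K U = n} := by
  refine Nat.card_congr
    { toFun := fun W => ⟨W.1.map p.mkQ, ?_⟩
      invFun := fun U => ⟨U.1.comap p.mkQ, by rw [finrank_comap_mkQ, U.2], le_comap_mkQ p U⟩
      left_inv := fun W => Subtype.ext ?_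
      right_inv := fun U => Subtype.ext (map_comap_eq_of_surjective p.mkQ_surjective U) }
  · have h := finrank_comap_mkQ p (W.1.map p.mkQ)
    rw [comap_map_mkQ, sup_eq_right.mpr W.2.2, W.2.1] at h
    omega
  · simp only [comap_map_mkQ, sup_eq_right.mpr W.2.2]

theorem card_finrank_eq_two_mem [Finite K] (hV : finrank K V = 3) {z : V} (hz : z ≠ 0) :
    Nat.card {W : Submodule K V // finrank K W = 2 ∧ z ∈ W} = Nat.card K + 1 := by
  have hquot : finrank K (V ⧸ K ∙ z) = 2 := by
    rw [finrank_quotient, hV, finrank_span_singleton hz]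
  calc Nat.card {W : Submodule K V // finrank K W = 2 ∧ z ∈ W}
      = Nat.card {W : Submodule K V // finrank K W = 1 + finrank K (K ∙ z) ∧ K ∙ z ≤ W} := by
        simp only [finrank_span_singleton hz, span_singleton_le_iff_mem]
    _ = Nat.card {U : Submodule K (V ⧸ K ∙ z) // finrank K U = 1} :=
        card_finrank_eq_add_of_le _ 1
    _ = Nat.card K + 1 := by
      rw [← Nat.card_congr (Projectivization.equivSubmodule K _),
        Projectivization.card_of_finrank_two K _ hquot]

end Submodule

namespace LieSubalgebra

section CommRing

variable {R L : Type*} [CommRing R] [LieRing L] [LieAlgebra R L]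

theorem card_subtype_eq_card_submodule {ΦL : LieSubalgebra R L → Prop}
    {ΦS : Submodule R L → Prop} (hΦ : ∀ A, ΦL A ↔ ΦS A.toSubmodule)
    (hex : ∀ W, ΦS W → ∃ A : LieSubalgebra R L, A.toSubmodule = W) :
    Nat.card {A // ΦL A} = Nat.card {W // ΦS W} := by
  refine Nat.card_congr
    (Equiv.ofBijective (fun A => ⟨A.1.toSubmodule, (hΦ A.1).mp A.2⟩) ⟨?_, ?_⟩)
  · exact fun A B hAB => Subtype.ext (toSubmodule_injective (congrArg Subtype.val hAB))
  · rintro ⟨W, hW⟩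
    obtain ⟨A, rfl⟩ := hex W hW
    exact ⟨⟨A, (hΦ A).mpr hW⟩, rfl⟩

theorem exists_toSubmodule_eq_of_lie_mem_span {z : L} (hL : ∀ x y : L, ⁅x, y⁆ ∈ R ∙ z)
    {W : Submodule R L} (hzW : z ∈ W) : ∃ A : LieSubalgebra R L, A.toSubmodule = W :=
  W.exists_lieSubalgebra_coe_eq_iff.mpr fun x y _ _ =>
    (Submodule.span_singleton_le_iff_mem z W).mpr hzW (hL x y)

theorem mem_of_sup_span_singleton_eq_top {e f z : L} (hz : ∀ x : L, ⁅x, z⁆ = 0)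
    (hef : ⁅e, f⁆ = z) {B : LieSubalgebra R L} (hB : B.toSubmodule ⊔ R ∙ z = ⊤) :
    z ∈ B := by
  obtain ⟨b, hb, c, hc, rfl⟩ := Submodule.mem_sup.mp (hB ▸ Submodule.mem_top (x := e))
  obtain ⟨b', hb', c', hc', rfl⟩ := Submodule.mem_sup.mp (hB ▸ Submodule.mem_top (x := f))
  obtain ⟨s, rfl⟩ := Submodule.mem_span_singleton.mp hc
  obtain ⟨t, rfl⟩ := Submodule.mem_span_singleton.mp hc'
  have hz' : ∀ x : L, ⁅z, x⁆ = 0 := fun x => by rw [← lie_skew, hz, neg_zero]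
  rw [← hef]
  simpa [hz, hz'] using B.lie_mem hb hb'

theorem lieSpan_singleton_sup_ne_top {e f z : L} (hL : ∀ x y : L, ⁅x, y⁆ ∈ R ∙ z)
    (hz : ∀ x : L, ⁅x, z⁆ = 0) (hef : ⁅e, f⁆ = z) {B : LieSubalgebra R L}
    (hB : B ≠ ⊤) : lieSpan R L {z} ⊔ B ≠ ⊤ := by
  have hzW : z ∈ B.toSubmodule ⊔ R ∙ z :=
    Submodule.mem_sup_right (Submodule.mem_span_singleton_self z)
  obtain ⟨A, hA⟩ := exists_toSubmodule_eq_of_lie_mem_span hL hzW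
  intro htop
  have hzA : lieSpan R L {z} ≤ A := by
    rw [lieSpan_le, Set.singleton_subset_iff, SetLike.mem_coe, ← mem_toSubmodule, hA]
    exact hzW
  have hBA : B ≤ A := by rw [← toSubmodule_le_toSubmodule, hA]; exact le_sup_left
  have hAtop : B.toSubmodule ⊔ R ∙ z = ⊤ := by
    rw [← hA, top_unique (a := A) (htop ▸ sup_le hzA hBA), top_toSubmodule]
  have hzB := mem_of_sup_span_singleton_eq_top hz hef hAtop
  rw [sup_eq_left.mpr ((Submodule.span_singleton_le_iff_mem z _).mpr hzB)] at hAtop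
  exact hB (toSubmodule_injective hAtop)

end CommRing

variable {K L : Type*} [Field K] [LieRing L] [LieAlgebra K L]

theorem exists_toSubmodule_eq_of_finrank_eq_one {W : Submodule K L} (hW : finrank K W = 1) :
    ∃ A : LieSubalgebra K L, A.toSubmodule = W := by
  obtain ⟨v, -, hv⟩ := finrank_eq_one_iff'.mp hW
  refine W.exists_lieSubalgebra_coe_eq_iff.mpr fun x y hx hy => ?_
  obtain ⟨a, ha⟩ := hv ⟨x, hx⟩
  obtain ⟨b, hb⟩ := hv ⟨y, hy⟩
  have hx' : x = a • (v : L) := (congrArg Subtype.val ha).symm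
  have hy' : y = b • (v : L) := (congrArg Subtype.val hb).symm
  simp [hx', hy']

theorem mem_of_finrank_add_one_eq [FiniteDimensional K L] {e f z : L}
    (hz : ∀ x : L, ⁅x, z⁆ = 0) (hef : ⁅e, f⁆ = z) {B : LieSubalgebra K L}
    (hB : finrank K B + 1 = finrank K L) : z ∈ B := by
  by_contra hzB
  refine hzB (mem_of_sup_span_singleton_eq_top hz hef (Submodule.eq_top_of_finrank_eq ?_))
  rw [Submodule.finrank_sup_span_singleton hzB]
  exact hB

theorem sup_eq_top_iff_forall_finrank_eq_two (hL : finrank K L = 3) {A B : LieSubalgebra K L}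
    (hA : finrank K A = 1) (hB : finrank K B = 1) (hAB : A ≠ B) :
    A ⊔ B = ⊤ ↔ ∀ P : LieSubalgebra K L, finrank K P = 2 → ¬(A ≤ P ∧ B ≤ P) := by
  have : FiniteDimensional K L := Module.finite_of_finrank_eq_succ hL
  constructor
  · rintro hsup P hP ⟨hAP, hBP⟩
    have hPtop : P.toSubmodule = ⊤ := by rw [top_unique (a := P) (hsup ▸ sup_le hAP hBP)]; rfl
    have h : finrank K P = finrank K L := by rw [← finrank_top K L, ← hPtop]; rfl
    omega
  · intro hP
    by_contra hne
    refine hP (A ⊔ B) (le_antisymm ?_ ?_) ⟨le_sup_left, le_sup_right⟩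
    · have h := Submodule.finrank_lt (s := (A ⊔ B).toSubmodule)
        fun h => hne (toSubmodule_injective h)
      rw [hL] at h
      exact Nat.lt_succ_iff.mp h
    · have h := Submodule.finrank_sup_eq_two hA hB (fun h => hAB (toSubmodule_injective h))
      rw [← h]
      exact Submodule.finrank_mono (sup_le (toSubmodule_le_toSubmodule _ _ |>.mpr le_sup_left)
        (toSubmodule_le_toSubmodule _ _ |>.mpr le_sup_right))

theorem card_finrank_eq_two [Finite K] {e f z : L} (hL : ∀ x y : L, ⁅x, y⁆ ∈ K ∙ z)
    (hz : ∀ x : L, ⁅x, z⁆ = 0) (hef : ⁅e, f⁆ = z) (hdim : finrank K L = 3) (hz0 : z ≠ 0) :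
    Nat.card {P : LieSubalgebra K L // finrank K P = 2} = Nat.card K + 1 := by
  have : FiniteDimensional K L := Module.finite_of_finrank_eq_succ hdim
  rw [card_subtype_eq_card_submodule (ΦL := fun P => finrank K P = 2)
      (ΦS := fun W => finrank K W = 2 ∧ z ∈ W)
      (fun P => ⟨fun hP => ⟨hP, mem_of_finrank_add_one_eq hz hef (by rw [hP, hdim])⟩, And.left⟩)
      (fun W hW => exists_toSubmodule_eq_of_lie_mem_span hL hW.2),
    Submodule.card_finrank_eq_two_mem hdim hz0]

theorem card_finrank_eq_one_ne_lieSpan_le [Finite K] {P : LieSubalgebra K L}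
    (hP : finrank K P = 2) {z : L} (hz0 : z ≠ 0) (hzP : z ∈ P) :
    Nat.card {A : LieSubalgebra K L // finrank K A = 1 ∧ A ≠ lieSpan K L {z} ∧ A ≤ P} =
      Nat.card K := by
  have hZ : (lieSpan K L {z}).toSubmodule = K ∙ z :=
    coe_lieSpan_eq_span_of_forall_lie_eq_zero (by simp)
  rw [card_subtype_eq_card_submodule
      (ΦS := fun W => finrank K W = 1 ∧ W ≠ K ∙ z ∧ W ≤ P.toSubmodule)
      (fun A => by
        rw [← hZ, toSubmodule_injective.ne_iff, toSubmodule_le_toSubmodule]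
        rfl)
      (fun W hW => exists_toSubmodule_eq_of_finrank_eq_one hW.1),
    Submodule.card_finrank_eq_one_le_ne hP (finrank_span_singleton hz0)
      ((Submodule.span_singleton_le_iff_mem _ _).mpr hzP)]

end LieSubalgebra

section Heisenberg

variable {F H : Type*} [Field F] [LieRing H] [LieAlgebra F H] {e f h : H}

theorem heisenberg_lie_h (hspan : Submodule.span F {e, f, h} = ⊤)
    (heh : ⁅e, h⁆ = 0) (hfh : ⁅f, h⁆ = 0) (x : H) : ⁅x, h⁆ = 0 := by
  have hx : x ∈ Submodule.span F {e, f, h} := hspan ▸ Submodule.mem_top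
  refine (Submodule.mem_bot F).mp (lie_mem_of_mem_span ?_ hx (Submodule.mem_span_singleton_self h))
  rintro y (rfl | rfl | rfl) _ rfl <;> simp [heh, hfh]

theorem heisenberg_lie_mem_span_h (hspan : Submodule.span F {e, f, h} = ⊤)
    (hef : ⁅e, f⁆ = h) (heh : ⁅e, h⁆ = 0) (hfh : ⁅f, h⁆ = 0) (x y : H) :
    ⁅x, y⁆ ∈ F ∙ h := by
  have hx : ∀ x : H, x ∈ Submodule.span F {e, f, h} := fun x => hspan ▸ Submodule.mem_top
  have hhe : ⁅h, e⁆ = 0 := by rw [← lie_skew, heh, neg_zero]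
  have hhf : ⁅h, f⁆ = 0 := by rw [← lie_skew, hfh, neg_zero]
  have hfe : ⁅f, e⁆ = -h := by rw [← lie_skew, hef]
  refine lie_mem_of_mem_span ?_ (hx x) (hx y)
  rintro x (rfl | rfl | rfl) y (rfl | rfl | rfl) <;>
    simp [hef, heh, hfh, hhe, hhf, hfe, Submodule.mem_span_singleton_self]

theorem heisenberg_h_ne_zero (hspan : Submodule.span F {e, f, h} = ⊤)
    (hdim : finrank F H = 3) : h ≠ 0 := by
  rintro rfl
  rw [Set.pair_comm, Set.insert_comm, Submodule.span_insert_zero] at hspan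
  have := finrank_le_of_span_eq_top (R := F) (v := ![e, f])
    (by simpa [Matrix.range_cons, Set.pair_comm] using hspan)
  rw [hdim, Fintype.card_fin] at this
  omega

end Heisenberg

/-- In the comaximal graph of the Heisenberg algebra `H₃(F_q)`, the center
`Z = span(h)` is an isolated vertex, and the induced subgraph on the noncentral
lines is complete multipartite with `q+1` parts of size `q`: two distinct
noncentral lines are adjacent iff they lie in no common plane, there are `q+1`
planes, and each plane contains exactly `q` noncentral lines. -/
theorem heisenberg_comaximal_structure
    (F : Type*) [Field F] [Fintype F] (q : ℕ) (hq : Fintype.card F = q)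
    (H : Type*) [LieRing H] [LieAlgebra F H]
    (e f h : H) (hspan : Submodule.span F {e, f, h} = ⊤)
    (hdim : finrank F H = 3)
    (hef : ⁅e, f⁆ = h) (heh : ⁅e, h⁆ = 0) (hfh : ⁅f, h⁆ = 0) :
    (∀ B : LieSubalgebra F H, B ≠ ⊥ → B ≠ ⊤ → B ≠ LieSubalgebra.lieSpan F H {h} →
        LieSubalgebra.lieSpan F H {h} ⊔ B ≠ ⊤) ∧
    (∀ A B : LieSubalgebra F H, finrank F A = 1 → finrank F B = 1 →
        A ≠ LieSubalgebra.lieSpan F H {h} → B ≠ LieSubalgebra.lieSpan F H {h} →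
        A ≠ B →
        (A ⊔ B = ⊤ ↔
          ∀ P : LieSubalgebra F H, finrank F P = 2 → ¬(A ≤ P ∧ B ≤ P))) ∧
    Nat.card {P : LieSubalgebra F H // finrank F P = 2} = q + 1 ∧
    (∀ P : LieSubalgebra F H, finrank F P = 2 →
        Nat.card {A : LieSubalgebra F H // finrank F A = 1 ∧
          A ≠ LieSubalgebra.lieSpan F H {h} ∧ A ≤ P} = q) := by
  have : FiniteDimensional F H := Module.finite_of_finrank_eq_succ hdim
  have hcent := heisenberg_lie_h hspan heh hfh
  have hder := heisenberg_lie_mem_span_h hspan hef heh hfh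
  have hh0 := heisenberg_h_ne_zero hspan hdim
  rw [← Nat.card_eq_fintype_card] at hq
  subst hq
  exact ⟨fun B _ hB _ => LieSubalgebra.lieSpan_singleton_sup_ne_top hder hcent hef hB,
    fun A B hA hB _ _ hAB => LieSubalgebra.sup_eq_top_iff_forall_finrank_eq_two hdim hA hB hAB,
    LieSubalgebra.card_finrank_eq_two hder hcent hef hdim hh0,
    fun P hP => LieSubalgebra.card_finrank_eq_one_ne_lieSpan_le hP hh0
      (LieSubalgebra.mem_of_finrank_add_one_eq hcent hef (by rw [hP, hdim]))⟩
end

section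
/- Let L be the 3-dimensional Lie algebra over F_q with basis x, y, z and brackets [x,y] = y, [x,z] = [y,z] = 0. Then the two-dimensional Lie subalgebras of L are precisely the q+1 planes containing y together with the q planes span(x + αy, z) for α ∈ F_q; in particular L has exactly 2q+1 two-dimensional Lie subalgebras. -/
/-!
Every bracket is a multiple of `y`, so each plane through `y` is a subalgebra. A plane `U` not
containing `y` is a complement of `F ∙ y`; if it is a subalgebra, `⁅U, U⁆ ⊆ U ⊓ F ∙ y = 0`.
Writing `x = u + c • y` and `z = w + d • y` with `u, w ∈ U`, the relation `⁅u, w⁆ = -d • y = 0`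
forces `z ∈ U`, hence `U = span {x - c • y, z}`. Planes through `y` are the preimages of the
lines of the plane `L ⧸ F ∙ y`, i.e. the `q + 1` points of a projective line.
-/

open Module

section VectorSpace

variable {K V : Type*} [Field K] [AddCommGroup V] [Module K V]

theorem Submodule.finrank_comap_mkQ_s12 [FiniteDimensional K V] (p : Submodule K V)
    (W : Submodule K (V ⧸ p)) :
    finrank K (W.comap p.mkQ) = finrank K W + finrank K p := by
  have h := LinearMap.finrank_range_add_finrank_ker (p.mkQ.domRestrict (W.comap p.mkQ))
  rw [LinearMap.range_domRestrict, Submodule.map_comap_eq_of_surjective p.mkQ_surjective,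
    LinearMap.ker_domRestrict, Submodule.ker_mkQ] at h
  rw [← h, (Submodule.comapSubtypeEquivOfLe (Submodule.le_comap_mkQ p W)).finrank_eq]

theorem natCard_finrank_eq_two_and_mem [Finite K] (hV : finrank K V = 3) {v : V} (hv : v ≠ 0) :
    Nat.card {U : Submodule K V // finrank K U = 2 ∧ v ∈ U} = Nat.card K + 1 := by
  have : FiniteDimensional K V := .of_finrank_pos (by omega)
  set p := K ∙ v
  have hp : finrank K p = 1 := finrank_span_singleton hv
  let f : {W : Submodule K (V ⧸ p) // finrank K W = 1} →
      {U : Submodule K V // finrank K U = 2 ∧ v ∈ U} := fun W =>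
    ⟨W.1.comap p.mkQ, by rw [Submodule.finrank_comap_mkQ_s12, W.2, hp],
      Submodule.le_comap_mkQ p W (Submodule.mem_span_singleton_self v)⟩
  have hf : Function.Bijective f := by
    refine ⟨fun W W' h => Subtype.ext (Submodule.comap_injective_of_surjective
      p.mkQ_surjective (congrArg Subtype.val h)), ?_⟩
    rintro ⟨U, hU, hvU⟩
    have hpU : (U.map p.mkQ).comap p.mkQ = U := by
      rw [Submodule.comap_map_mkQ,
        sup_eq_right.mpr ((Submodule.span_singleton_le_iff_mem _ _).mpr hvU)]
    refine ⟨⟨U.map p.mkQ, ?_⟩, Subtype.ext hpU⟩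
    have := Submodule.finrank_comap_mkQ_s12 p (U.map p.mkQ)
    rw [hpU, hU, hp] at this
    omega
  have hquot : finrank K (V ⧸ p) = 2 := by
    have := p.finrank_quotient_add_finrank
    omega
  rw [← Nat.card_eq_of_bijective f hf, ← Nat.card_congr (Projectivization.equivSubmodule K _),
    Projectivization.card_of_finrank_two K _ hquot]

theorem finrank_span_pair_le (u w : V) :
    finrank K (Submodule.span K {u, w}) ≤ 2 := by
  classical
  calc finrank K (Submodule.span K {u, w}) ≤ ({u, w} : Set V).toFinset.card :=
        finrank_span_le_card _
    _ ≤ 2 := by simpa using Finset.card_le_two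

end VectorSpace

theorem lie_eq_zero_of_mem_span_pair {R L : Type*} [CommRing R] [LieRing L] [LieAlgebra R L]
    {u w a b : L} (huw : ⁅u, w⁆ = 0) (ha : a ∈ Submodule.span R {u, w})
    (hb : b ∈ Submodule.span R {u, w}) : ⁅a, b⁆ = 0 := by
  obtain ⟨a₁, a₂, rfl⟩ := Submodule.mem_span_pair.mp ha
  obtain ⟨b₁, b₂, rfl⟩ := Submodule.mem_span_pair.mp hb
  have hwu : ⁅w, u⁆ = 0 := by rw [← lie_skew, huw, neg_zero]
  simp [huw, hwu]

theorem LieSubalgebra.natCard_subtype_eq_ncard {R L : Type*} [CommRing R] [LieRing L]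
    [LieAlgebra R L] (P : Submodule R L → Prop) :
    Nat.card {A : LieSubalgebra R L // P A.toSubmodule} =
      Set.ncard {U : Submodule R L | P U ∧ ∀ a ∈ U, ∀ b ∈ U, ⁅a, b⁆ ∈ U} := by
  rw [← Nat.card_coe_set_eq]
  exact Nat.card_congr
    { toFun A := ⟨A.1.toSubmodule, A.2, fun _ ha _ hb => A.1.lie_mem ha hb⟩
      invFun U := ⟨{ U.1 with lie_mem' := fun ha hb => U.2.2 _ ha _ hb }, U.2.1⟩
      left_inv _ := rfl
      right_inv _ := rfl }

namespace NonNilpotentDimThree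

variable {F L : Type*} [Field F] [LieRing L] [LieAlgebra F L] {x y z : L}

theorem lie_mem_span_singleton (hspan : Submodule.span F {x, y, z} = ⊤)
    (hxy : ⁅x, y⁆ = y) (hxz : ⁅x, z⁆ = 0) (hyz : ⁅y, z⁆ = 0) (a b : L) : ⁅a, b⁆ ∈ F ∙ y := by
  obtain ⟨a₁, a₂, a₃, rfl⟩ := Submodule.mem_span_triple.mp (hspan ▸ Submodule.mem_top (x := a))
  obtain ⟨b₁, b₂, b₃, rfl⟩ := Submodule.mem_span_triple.mp (hspan ▸ Submodule.mem_top (x := b))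
  have hyx : ⁅y, x⁆ = -y := by rw [← lie_skew, hxy]
  have hzx : ⁅z, x⁆ = 0 := by rw [← lie_skew, hxz, neg_zero]
  have hzy : ⁅z, y⁆ = 0 := by rw [← lie_skew, hyz, neg_zero]
  refine Submodule.mem_span_singleton.mpr ⟨a₁ * b₂ - a₂ * b₁, ?_⟩
  simp only [add_lie, lie_add, smul_lie, lie_smul, hxy, hxz, hyz, hyx, hzx, hzy, lie_self]
  module

theorem span_pair_sup_span_singleton_eq_top (hspan : Submodule.span F {x, y, z} = ⊤) (α : F) :
    Submodule.span F {x + α • y, z} ⊔ F ∙ y = ⊤ := by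
  refine eq_top_iff.mpr (hspan ▸ Submodule.span_le.mpr ?_)
  have hy : y ∈ Submodule.span F {x + α • y, z} ⊔ F ∙ y :=
    Submodule.mem_sup_right (Submodule.mem_span_singleton_self y)
  have hpair : x + α • y ∈ Submodule.span F {x + α • y, z} ⊔ F ∙ y :=
    Submodule.mem_sup_left (Submodule.subset_span (by simp))
  have hz : z ∈ Submodule.span F {x + α • y, z} ⊔ F ∙ y :=
    Submodule.mem_sup_left (Submodule.subset_span (by simp))
  rintro v (rfl | rfl | rfl)
  · simpa using sub_mem hpair (Submodule.smul_mem _ α hy)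
  · exact hy
  · exact hz

theorem notMem_span_pair (hspan : Submodule.span F {x, y, z} = ⊤) (hdim : finrank F L = 3)
    (α : F) : y ∉ Submodule.span F {x + α • y, z} := by
  intro hy
  have htop := span_pair_sup_span_singleton_eq_top hspan α
  rw [sup_eq_left.mpr ((Submodule.span_singleton_le_iff_mem _ _).mpr hy)] at htop
  have := finrank_span_pair_le (K := F) (x + α • y) z
  rw [htop, finrank_top, hdim] at this
  omega

theorem finrank_span_pair_eq_two (hspan : Submodule.span F {x, y, z} = ⊤)
    (hdim : finrank F L = 3) (α : F) : finrank F (Submodule.span F {x + α • y, z}) = 2 := by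
  have : FiniteDimensional F L := .of_finrank_pos (by omega)
  have := Submodule.finrank_sup_span_singleton (notMem_span_pair hspan hdim α)
  rw [span_pair_sup_span_singleton_eq_top hspan α, finrank_top, hdim] at this
  omega

theorem span_pair_injective (hspan : Submodule.span F {x, y, z} = ⊤) (hdim : finrank F L = 3) :
    Function.Injective fun α : F => Submodule.span F {x + α • y, z} := by
  intro α β (h : Submodule.span F {x + α • y, z} = Submodule.span F {x + β • y, z})
  have hα : x + α • y ∈ Submodule.span F {x + β • y, z} :=
    h ▸ Submodule.subset_span (by simp)
  have hβ : x + β • y ∈ Submodule.span F {x + β • y, z} := Submodule.subset_span (by simp)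
  by_contra hne
  have hsub := sub_mem hα hβ
  rw [show x + α • y - (x + β • y) = (α - β) • y by module,
    Submodule.smul_mem_iff _ (sub_ne_zero.mpr hne)] at hsub
  exact notMem_span_pair hspan hdim β hsub

theorem eq_span_pair_of_lie_mem (hspan : Submodule.span F {x, y, z} = ⊤)
    (hdim : finrank F L = 3) (hxy : ⁅x, y⁆ = y) (hxz : ⁅x, z⁆ = 0) (hyz : ⁅y, z⁆ = 0)
    {U : Submodule F L} (hU : finrank F U = 2) (hclosed : ∀ a ∈ U, ∀ b ∈ U, ⁅a, b⁆ ∈ U)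
    (hy : y ∉ U) : ∃ α : F, U = Submodule.span F {x + α • y, z} := by
  have : FiniteDimensional F L := .of_finrank_pos (by omega)
  have htop : U ⊔ F ∙ y = ⊤ := Submodule.eq_top_of_finrank_eq (by
    rw [Submodule.finrank_sup_span_singleton hy, hU, hdim])
  obtain ⟨u, hu, _, hc, hux⟩ := Submodule.mem_sup.mp (htop ▸ Submodule.mem_top (x := x))
  obtain ⟨c, rfl⟩ := Submodule.mem_span_singleton.mp hc
  obtain ⟨w, hw, _, hd, hwz⟩ := Submodule.mem_sup.mp (htop ▸ Submodule.mem_top (x := z))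
  obtain ⟨d, rfl⟩ := Submodule.mem_span_singleton.mp hd
  have hbr_zero : ⁅u, w⁆ = 0 :=
    Submodule.disjoint_def.mp (Submodule.disjoint_span_singleton_of_notMem hy) _
      (hclosed u hu w hw) (lie_mem_span_singleton hspan hxy hxz hyz u w)
  have hbr : ⁅u, w⁆ = -d • y := by
    rw [eq_sub_of_add_eq hux, eq_sub_of_add_eq hwz]
    simp only [sub_lie, lie_sub, smul_lie, lie_smul, hxy, hxz, hyz, lie_self]
    module
  have hd : d = 0 := by
    rw [hbr, smul_eq_zero, neg_eq_zero] at hbr_zero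
    exact hbr_zero.resolve_right fun h => hy (h ▸ U.zero_mem)
  rw [hd, zero_smul, add_zero] at hwz
  refine ⟨-c, (Submodule.eq_of_le_of_finrank_eq ?_ ?_).symm⟩
  · rw [Submodule.span_le]
    rintro v (rfl | rfl)
    · rwa [neg_smul, ← sub_eq_add_neg, ← eq_sub_of_add_eq hux]
    · rwa [← hwz]
  · rw [finrank_span_pair_eq_two hspan hdim, hU]

theorem lie_mem_iff_mem_or_eq_span_pair (hspan : Submodule.span F {x, y, z} = ⊤)
    (hdim : finrank F L = 3) (hxy : ⁅x, y⁆ = y) (hxz : ⁅x, z⁆ = 0) (hyz : ⁅y, z⁆ = 0)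
    {U : Submodule F L} (hU : finrank F U = 2) :
    (∀ a ∈ U, ∀ b ∈ U, ⁅a, b⁆ ∈ U) ↔ (y ∈ U ∨ ∃ α : F, U = Submodule.span F {x + α • y, z}) := by
  refine ⟨fun hclosed => or_iff_not_imp_left.mpr
    (eq_span_pair_of_lie_mem hspan hdim hxy hxz hyz hU hclosed), ?_⟩
  rintro (hy | ⟨α, rfl⟩) a ha b hb
  · exact (Submodule.span_singleton_le_iff_mem _ _).mpr hy
      (lie_mem_span_singleton hspan hxy hxz hyz a b)
  · rw [lie_eq_zero_of_mem_span_pair (by simp [hxz, hyz]) ha hb]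
    exact zero_mem _

theorem setOf_lie_closed_eq_union (hspan : Submodule.span F {x, y, z} = ⊤)
    (hdim : finrank F L = 3) (hxy : ⁅x, y⁆ = y) (hxz : ⁅x, z⁆ = 0) (hyz : ⁅y, z⁆ = 0) :
    {U : Submodule F L | finrank F U = 2 ∧ ∀ a ∈ U, ∀ b ∈ U, ⁅a, b⁆ ∈ U} =
      {U : Submodule F L | finrank F U = 2 ∧ y ∈ U} ∪
        Set.range fun α : F => Submodule.span F {x + α • y, z} := by
  ext U
  simp only [Set.mem_union, Set.mem_range]
  constructor
  · rintro ⟨hU, hclosed⟩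
    rcases (lie_mem_iff_mem_or_eq_span_pair hspan hdim hxy hxz hyz hU).mp hclosed with
      hy | ⟨α, rfl⟩
    exacts [Or.inl ⟨hU, hy⟩, Or.inr ⟨α, rfl⟩]
  · rintro (⟨hU, hy⟩ | ⟨α, rfl⟩)
    · exact ⟨hU, (lie_mem_iff_mem_or_eq_span_pair hspan hdim hxy hxz hyz hU).mpr (Or.inl hy)⟩
    · have hU := finrank_span_pair_eq_two hspan hdim α
      exact ⟨hU, (lie_mem_iff_mem_or_eq_span_pair hspan hdim hxy hxz hyz hU).mpr
        (Or.inr ⟨α, rfl⟩)⟩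

theorem natCard_lieSubalgebra_finrank_two [Finite F] (hspan : Submodule.span F {x, y, z} = ⊤)
    (hdim : finrank F L = 3) (hxy : ⁅x, y⁆ = y) (hxz : ⁅x, z⁆ = 0) (hyz : ⁅y, z⁆ = 0) :
    Nat.card {A : LieSubalgebra F L // finrank F A = 2} =
      Nat.card {U : Submodule F L // finrank F U = 2 ∧ y ∈ U} + Nat.card F := by
  have : FiniteDimensional F L := .of_finrank_pos (by omega)
  have : Finite L := Module.finite_of_finite F
  have : Finite (Submodule F L) := Finite.of_injective _ SetLike.coe_injective
  have hdisj : Disjoint {U : Submodule F L | finrank F U = 2 ∧ y ∈ U}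
      (Set.range fun α : F => Submodule.span F {x + α • y, z}) := by
    rw [Set.disjoint_right]
    rintro _ ⟨α, rfl⟩ ⟨_, hy⟩
    exact notMem_span_pair hspan hdim α hy
  refine (LieSubalgebra.natCard_subtype_eq_ncard fun U : Submodule F L => finrank F U = 2).trans ?_
  rw [setOf_lie_closed_eq_union hspan hdim hxy hxz hyz, Set.ncard_union_eq hdisj,
    Set.ncard_range_of_injective (span_pair_injective hspan hdim), ← Nat.card_coe_set_eq]
  rfl

end NonNilpotentDimThree

open NonNilpotentDimThree in
/-- For the solvable non-nilpotent 3-dimensional Lie algebra over `F_q` with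
basis `x, y, z`, `[x,y] = y`, `[x,z] = [y,z] = 0`: a two-dimensional subspace
is a Lie subalgebra iff it contains `y` or equals `span(x + αy, z)` for some
`α`; there are `q+1` planes containing `y`, and `2q+1` two-dimensional
subalgebras in total. -/
theorem solvable_dim3_derived1_two_dim_subalgebras
    (F : Type*) [Field F] [Fintype F] (q : ℕ) (hq : Fintype.card F = q)
    (L : Type*) [LieRing L] [LieAlgebra F L]
    (x y z : L) (hspan : Submodule.span F {x, y, z} = ⊤)
    (hdim : finrank F L = 3)
    (hxy : ⁅x, y⁆ = y) (hxz : ⁅x, z⁆ = 0) (hyz : ⁅y, z⁆ = 0) :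
    (∀ U : Submodule F L, finrank F U = 2 →
        ((∀ a ∈ U, ∀ b ∈ U, ⁅a, b⁆ ∈ U) ↔
          (y ∈ U ∨ ∃ α : F, U = Submodule.span F {x + α • y, z}))) ∧
    Nat.card {U : Submodule F L // finrank F U = 2 ∧ y ∈ U} = q + 1 ∧
    Nat.card {A : LieSubalgebra F L // finrank F A = 2} = 2 * q + 1 := by
  have hy : y ≠ 0 := fun h => notMem_span_pair hspan hdim 0 (h ▸ Submodule.zero_mem _)
  have hplanes : Nat.card {U : Submodule F L // finrank F U = 2 ∧ y ∈ U} = q + 1 := by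
    rw [natCard_finrank_eq_two_and_mem hdim hy, Nat.card_eq_fintype_card, hq]
  refine ⟨fun U hU => lie_mem_iff_mem_or_eq_span_pair hspan hdim hxy hxz hyz hU, hplanes, ?_⟩
  rw [natCard_lieSubalgebra_finrank_two hspan hdim hxy hxz hyz, hplanes,
    Nat.card_eq_fintype_card, hq]
  ring
end

section
/- Let L be the 3-dimensional Lie algebra over F_q with basis x, y, z, [x,y] = y, [x,z] = [y,z] = 0. For a, b, c, d ∈ F_q, the lines X_{a,b} = span(x + ay + bz) and X_{c,d} = span(x + cy + dz) generate L if and only if a ≠ c and b ≠ d. -/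
/-!
The bracket of the two generators is `⁅x + ay + bz, x + cy + dz⁆ = (c - a) y`. If `a ≠ c` this
puts `y` in the generated subalgebra; the difference of the generators is `(a - c) y + (b - d) z`,
which gives `z` when `b ≠ d`, after which `x` follows. Conversely, if `a = c` the two generators commute, and if
`b = d` they lie in the span of `x + ay + bz` and `y`, which is closed under the bracket; either
way the generated subalgebra is a plane, not all of `L`.
-/

open Module Submodule

namespace LieSubalgebra

variable {R L : Type*} [CommRing R] [LieRing L] [LieAlgebra R L]

theorem coe_lieSpan_eq_span_of_forall_lie_mem {s : Set L}
    (hs : ∀ᵉ (x ∈ s) (y ∈ s), ⁅x, y⁆ ∈ span R s) :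
    (lieSpan R L s : Submodule R L) = span R s := by
  suffices ∀ {x y}, x ∈ span R s → y ∈ span R s → ⁅x, y⁆ ∈ span R s by
    refine le_antisymm ?_ submodule_span_le_lieSpan
    change _ ≤ ({ span R s with lie_mem' := this } : LieSubalgebra R L)
    rw [lieSpan_le]
    exact subset_span
  intro x y hx hy
  induction hx, hy using span_induction₂ with
  | mem_mem x y hx hy => exact hs x hx y hy
  | zero_left y hy => simp
  | zero_right x hx => simp
  | add_left x y z _ _ _ hx hy => simpa using add_mem hx hy
  | add_right x y z _ _ _ hx hy => simpa using add_mem hx hy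
  | smul_left r x y _ _ h => simpa using smul_mem _ r h
  | smul_right r x y _ _ h => simpa using smul_mem _ r h

theorem coe_lieSpan_pair_eq_span {e f : L} (h : ⁅e, f⁆ ∈ span R {e, f}) :
    (lieSpan R L {e, f} : Submodule R L) = span R {e, f} := by
  have hfe : ⁅f, e⁆ ∈ span R {e, f} := by
    rw [← lie_skew]
    exact neg_mem h
  refine coe_lieSpan_eq_span_of_forall_lie_mem ?_
  rintro _ (rfl | rfl) _ (rfl | rfl) <;> simp [h, hfe]

end LieSubalgebra

theorem Submodule.span_pair_ne_top {K V : Type*} [DivisionRing K] [AddCommGroup V] [Module K V]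
    (hV : 2 < finrank K V) (e f : V) : span K {e, f} ≠ ⊤ := by
  classical
  have hcard : ({e, f} : Set V).toFinset.card ≤ 2 := by
    rw [Set.toFinset_insert, Set.toFinset_singleton]
    exact (Finset.card_insert_le _ _).trans (by simp)
  exact (span_lt_top_of_card_lt_finrank (hcard.trans_lt hV)).ne

theorem LieSubalgebra.lieSpan_pair_ne_top {F L : Type*} [Field F] [LieRing L] [LieAlgebra F L]
    (hL : 2 < finrank F L) {e f : L} (h : ⁅e, f⁆ ∈ span F {e, f}) :
    lieSpan F L {e, f} ≠ ⊤ := by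
  rw [ne_eq, ← toSubmodule_eq_top, coe_lieSpan_pair_eq_span h]
  exact span_pair_ne_top hL e f

section SolvableDimThree

variable {F L : Type*} [Field F] [LieRing L] [LieAlgebra F L] {x y z : L}

theorem lie_line_line (hxy : ⁅x, y⁆ = y) (hxz : ⁅x, z⁆ = 0) (hyz : ⁅y, z⁆ = 0) (a b c d : F) :
    ⁅x + a • y + b • z, x + c • y + d • z⁆ = (c - a) • y := by
  have hyx : ⁅y, x⁆ = -y := by rw [← lie_skew, hxy]
  have hzx : ⁅z, x⁆ = 0 := by rw [← lie_skew, hxz, neg_zero]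
  have hzy : ⁅z, y⁆ = 0 := by rw [← lie_skew, hyz, neg_zero]
  simp only [lie_add, add_lie, lie_smul, smul_lie, hxy, hxz, hyz, hyx, hzx, hzy,
    lie_self, smul_zero, smul_neg, add_zero, zero_add]
  module

theorem lie_line_y (hxy : ⁅x, y⁆ = y) (hyz : ⁅y, z⁆ = 0) (a b : F) :
    ⁅x + a • y + b • z, y⁆ = y := by
  have hzy : ⁅z, y⁆ = 0 := by rw [← lie_skew, hyz, neg_zero]
  simp [add_lie, smul_lie, hxy, hzy]

theorem lieSpan_lines_ne_top_of_eq_left (hL : 2 < finrank F L) (hxy : ⁅x, y⁆ = y)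
    (hxz : ⁅x, z⁆ = 0) (hyz : ⁅y, z⁆ = 0) (a b d : F) :
    LieSubalgebra.lieSpan F L {x + a • y + b • z, x + a • y + d • z} ≠ ⊤ := by
  refine LieSubalgebra.lieSpan_pair_ne_top hL ?_
  rw [lie_line_line hxy hxz hyz, sub_self, zero_smul]
  exact zero_mem _

theorem lieSpan_lines_ne_top_of_eq_right (hL : 2 < finrank F L) (hxy : ⁅x, y⁆ = y)
    (hyz : ⁅y, z⁆ = 0) (a b c : F) :
    LieSubalgebra.lieSpan F L {x + a • y + b • z, x + c • y + b • z} ≠ ⊤ := by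
  set u := x + a • y + b • z
  have hplane : LieSubalgebra.lieSpan F L {u, y} ≠ ⊤ := by
    refine LieSubalgebra.lieSpan_pair_ne_top hL ?_
    rw [lie_line_y hxy hyz]
    exact subset_span (by simp)
  have hv : x + c • y + b • z = u + (c - a) • y := by module
  refine ne_top_of_le_ne_top hplane (LieSubalgebra.lieSpan_le.mpr ?_)
  rintro _ (rfl | rfl)
  · exact LieSubalgebra.subset_lieSpan (by simp)
  · rw [hv]
    exact add_mem (LieSubalgebra.subset_lieSpan (by simp))
      (LieSubalgebra.smul_mem _ _ (LieSubalgebra.subset_lieSpan (by simp)))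

theorem lieSpan_lines_eq_top (hspan : span F {x, y, z} = ⊤) (hxy : ⁅x, y⁆ = y)
    (hxz : ⁅x, z⁆ = 0) (hyz : ⁅y, z⁆ = 0) {a b c d : F} (hac : a ≠ c) (hbd : b ≠ d) :
    LieSubalgebra.lieSpan F L {x + a • y + b • z, x + c • y + d • z} = ⊤ := by
  set u := x + a • y + b • z
  set v := x + c • y + d • z
  set K := LieSubalgebra.lieSpan F L {u, v}
  have hu : u ∈ K := LieSubalgebra.subset_lieSpan (by simp)
  have hv : v ∈ K := LieSubalgebra.subset_lieSpan (by simp)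
  have hy : y ∈ K := by
    have h := K.lie_mem hu hv
    rwa [lie_line_line hxy hxz hyz, ← LieSubalgebra.mem_toSubmodule,
      smul_mem_iff _ (sub_ne_zero.mpr hac.symm)] at h
  have hz : z ∈ K := by
    have h : u - v - (a - c) • y ∈ K := sub_mem (sub_mem hu hv) (K.smul_mem _ hy)
    rwa [show u - v - (a - c) • y = (b - d) • z by module, ← LieSubalgebra.mem_toSubmodule,
      smul_mem_iff _ (sub_ne_zero.mpr hbd)] at h
  have hx : x ∈ K := by
    have h : u - a • y - b • z ∈ K := sub_mem (sub_mem hu (K.smul_mem _ hy)) (K.smul_mem _ hz)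
    rwa [show u - a • y - b • z = x by module] at h
  rw [← LieSubalgebra.toSubmodule_eq_top, eq_top_iff, ← hspan, span_le]
  rintro _ (rfl | rfl | rfl)
  exacts [hx, hy, hz]

end SolvableDimThree

theorem solvable_dim3_lines_generate_iff_general
    (F : Type*) [Field F]
    (L : Type*) [LieRing L] [LieAlgebra F L]
    (x y z : L) (hspan : Submodule.span F {x, y, z} = ⊤)
    (hdim : finrank F L = 3)
    (hxy : ⁅x, y⁆ = y) (hxz : ⁅x, z⁆ = 0) (hyz : ⁅y, z⁆ = 0)
    (a b c d : F) :
    LieSubalgebra.lieSpan F L {x + a • y + b • z, x + c • y + d • z} = ⊤ ↔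
      (a ≠ c ∧ b ≠ d) := by
  refine ⟨fun htop => ⟨?_, ?_⟩, fun ⟨hac, hbd⟩ => lieSpan_lines_eq_top hspan hxy hxz hyz hac hbd⟩
  · rintro rfl
    exact lieSpan_lines_ne_top_of_eq_left (by omega) hxy hxz hyz a b d htop
  · rintro rfl
    exact lieSpan_lines_ne_top_of_eq_right (by omega) hxy hyz a b c htop

/-- In the solvable 3-dimensional Lie algebra with `[x,y] = y`,
`[x,z] = [y,z] = 0` over `F_q`, the lines spanned by `x + ay + bz` and
`x + cy + dz` generate `L` iff `a ≠ c` and `b ≠ d`. -/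
theorem solvable_dim3_lines_generate_iff
    (F : Type*) [Field F] [Fintype F]
    (L : Type*) [LieRing L] [LieAlgebra F L]
    (x y z : L) (hspan : Submodule.span F {x, y, z} = ⊤)
    (hdim : finrank F L = 3)
    (hxy : ⁅x, y⁆ = y) (hxz : ⁅x, z⁆ = 0) (hyz : ⁅y, z⁆ = 0)
    (a b c d : F) :
    LieSubalgebra.lieSpan F L {x + a • y + b • z, x + c • y + d • z} = ⊤ ↔
      (a ≠ c ∧ b ≠ d) :=
  solvable_dim3_lines_generate_iff_general F L x y z hspan hdim hxy hxz hyz a b c d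
end

section
/- Let L = F x ⊕ V be a 3-dimensional Lie algebra over a field F where V is a 2-dimensional abelian ideal and ad x restricted to V is invertible with no eigenvector in V. Then the only two-dimensional Lie subalgebra of L is V. -/
/-!
If a 2-dimensional subalgebra `U` differed from `V`, then `U + V = L` for dimension reasons and
`U ∩ V` would be a line. Writing `x = u + v` with `u ∈ U`, `v ∈ V`, and using that `V` is abelian,
`⁅x, w⁆ = ⁅u, w⁆` lies in `U ∩ V` for every `w ∈ U ∩ V`; so `ad x` would have an eigenvector in `V`.
-/

open Module

namespace Submodule

variable {K V : Type*} [DivisionRing K] [AddCommGroup V] [Module K V]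

theorem sup_eq_top_of_ne_of_finrank_eq_of_finrank_eq_succ [FiniteDimensional K V]
    {P Q : Submodule K V} {n : ℕ} (hV : finrank K V = n + 1) (hP : finrank K P = n)
    (hQ : finrank K Q = n) (hPQ : P ≠ Q) : P ⊔ Q = ⊤ := by
  have hlt : P < P ⊔ Q := by
    refine lt_of_le_of_ne le_sup_left fun h => hPQ ?_
    exact (eq_of_le_of_finrank_eq (sup_eq_left.mp h.symm) (hQ.trans hP.symm)).symm
  have hle : finrank K ↥(P ⊔ Q) ≤ n + 1 := hV ▸ finrank_le _
  have := finrank_lt_finrank_of_lt hlt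
  exact eq_top_of_finrank_eq (by omega)

theorem finrank_inf_add_one_of_ne_of_finrank_eq_of_finrank_eq_succ [FiniteDimensional K V]
    {P Q : Submodule K V} {n : ℕ} (hV : finrank K V = n + 1) (hP : finrank K P = n)
    (hQ : finrank K Q = n) (hPQ : P ≠ Q) : finrank K ↥(P ⊓ Q) + 1 = n := by
  have hsum := finrank_sup_add_finrank_inf_eq P Q
  rw [sup_eq_top_of_ne_of_finrank_eq_of_finrank_eq_succ hV hP hQ hPQ, finrank_top] at hsum
  omega

theorem exists_eigenvector_of_finrank_eq_one_of_mapsTo {W : Submodule K V}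
    (hW : finrank K W = 1) (f : V → V) (hf : ∀ w ∈ W, f w ∈ W) :
    ∃ w ∈ W, w ≠ 0 ∧ ∃ c : K, f w = c • w := by
  obtain ⟨w, hw0, hspan⟩ := finrank_eq_one_iff'.mp hW
  obtain ⟨c, hc⟩ := hspan ⟨f w, hf w w.2⟩
  exact ⟨w, w.2, fun h => hw0 (Subtype.ext h), c, (congrArg Subtype.val hc).symm⟩

end Submodule

theorem LieSubalgebra.lie_mem_inf_of_sup_eq_top {R L : Type*} [CommRing R] [LieRing L]
    [LieAlgebra R L] (U : LieSubalgebra R L) (I : LieIdeal R L)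
    (hI : ∀ a ∈ I, ∀ b ∈ I, ⁅a, b⁆ = 0)
    (hUI : (U : Submodule R L) ⊔ (I : Submodule R L) = ⊤) (x : L) {w : L}
    (hw : w ∈ (U : Submodule R L) ⊓ (I : Submodule R L)) :
    ⁅x, w⁆ ∈ (U : Submodule R L) ⊓ (I : Submodule R L) := by
  obtain ⟨u, hu, v, hv, rfl⟩ := Submodule.mem_sup.mp (hUI ▸ Submodule.mem_top : x ∈ _)
  rw [add_lie, hI v hv w hw.2, add_zero]
  exact ⟨U.lie_mem hu hw.1, I.lie_mem hw.2⟩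

theorem unique_two_dim_subalgebra_of_no_eigenvector_general
    (F : Type*) [Field F] (L : Type*) [LieRing L] [LieAlgebra F L]
    (hdim : finrank F L = 3)
    (x : L) (V : LieIdeal F L)
    (hV : finrank F V = 2)
    (hVab : ∀ a ∈ V, ∀ b ∈ V, ⁅a, b⁆ = 0)
    (heig : ¬ ∃ v ∈ V, v ≠ 0 ∧ ∃ c : F, ⁅x, v⁆ = c • v) :
    ∀ U : LieSubalgebra F L, finrank F U = 2 →
      (U : Submodule F L) = (V : Submodule F L) := by
  have : FiniteDimensional F L := Module.finite_of_finrank_eq_succ hdim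
  intro U hU
  by_contra hUV
  have hsup := Submodule.sup_eq_top_of_ne_of_finrank_eq_of_finrank_eq_succ hdim hU hV hUV
  have hline : finrank F ↥((U : Submodule F L) ⊓ V) = 1 :=
    Nat.succ_injective
      (Submodule.finrank_inf_add_one_of_ne_of_finrank_eq_of_finrank_eq_succ hdim hU hV hUV)
  obtain ⟨w, hw, hw0, c, hc⟩ := Submodule.exists_eigenvector_of_finrank_eq_one_of_mapsTo hline
    (fun y => ⁅x, y⁆) fun w hw => U.lie_mem_inf_of_sup_eq_top V hVab hsup x hw
  exact heig ⟨w, hw.2, hw0, c, hc⟩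

/-- Let `L = Fx ⊕ V` be a 3-dimensional Lie algebra where `V` is a
2-dimensional abelian ideal and `ad x` acts invertibly on `V` with no
eigenvector in `V`. Then the only two-dimensional Lie subalgebra of `L`
is `V`. -/
theorem unique_two_dim_subalgebra_of_no_eigenvector
    (F : Type*) [Field F] (L : Type*) [LieRing L] [LieAlgebra F L]
    (hdim : finrank F L = 3)
    (x : L) (V : LieIdeal F L)
    (hV : finrank F V = 2)
    (hVab : ∀ a ∈ V, ∀ b ∈ V, ⁅a, b⁆ = 0)
    (hdecomp : Submodule.span F {x} ⊔ (V : Submodule F L) = ⊤)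
    (hx : x ∉ V)
    (hinj : ∀ v ∈ V, ⁅x, v⁆ = 0 → v = 0)
    (heig : ¬ ∃ v ∈ V, v ≠ 0 ∧ ∃ c : F, ⁅x, v⁆ = c • v) :
    ∀ U : LieSubalgebra F L, finrank F U = 2 →
      (U : Submodule F L) = (V : Submodule F L) :=
  unique_two_dim_subalgebra_of_no_eigenvector_general F L hdim x V hV hVab heig
end

section
/- Let L = F x ⊕ V be a 3-dimensional Lie algebra where V is a 2-dimensional abelian ideal and ad x acts invertibly on V. Every two-dimensional subalgebra U of L with x ∈ U has the form Fx + Fv where v ∈ V is an eigenvector of ad x, and every two-dimensional subalgebra U with U ≠ V and x ∉ U contains an eigenvector of ad x in V. -/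
open Module

/-- Let `L = Fx ⊕ V` with `V` a 2-dimensional abelian ideal on which `ad x`
acts invertibly. Every two-dimensional subalgebra `U` containing `x` has the
form `Fx + Fv` with `v ∈ V` an eigenvector of `ad x`, and every
two-dimensional subalgebra `U ≠ V` not containing `x` contains an eigenvector
of `ad x` in `V`. -/
theorem two_dim_subalgebras_of_ad_invertible
    (F : Type*) [Field F] (L : Type*) [LieRing L] [LieAlgebra F L]
    (hdim : finrank F L = 3)
    (x : L) (V : LieIdeal F L)
    (hV : finrank F V = 2)
    (hVab : ∀ a ∈ V, ∀ b ∈ V, ⁅a, b⁆ = 0)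
    (hdecomp : Submodule.span F {x} ⊔ (V : Submodule F L) = ⊤)
    (hx : x ∉ V)
    (hinj : ∀ v ∈ V, ⁅x, v⁆ = 0 → v = 0) :
    (∀ U : LieSubalgebra F L, finrank F U = 2 → x ∈ U →
        ∃ v ∈ V, v ≠ 0 ∧ (∃ c : F, ⁅x, v⁆ = c • v) ∧
          (U : Submodule F L) = Submodule.span F {x} ⊔ Submodule.span F {v}) ∧
    (∀ U : LieSubalgebra F L, finrank F U = 2 →
        (U : Submodule F L) ≠ (V : Submodule F L) → x ∉ U →
        ∃ v ∈ V, v ∈ U ∧ v ≠ 0 ∧ ∃ c : F, ⁅x, v⁆ = c • v) := by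
  have hFD : FiniteDimensional F L := Module.finite_of_finrank_pos (by omega)
  have hVfr : finrank F (V : Submodule F L) = 2 := hV
  constructor
  · -- Part 1
    intro U hU2 hxU
    have hUfr : finrank F (U : Submodule F L) = 2 := hU2
    have hsum := Submodule.finrank_sup_add_finrank_inf_eq (U : Submodule F L) (V : Submodule F L)
    have hle : finrank F ↥((U : Submodule F L) ⊔ (V : Submodule F L)) ≤ 3 :=
      hdim ▸ Submodule.finrank_le _
    have hW1 : 1 ≤ finrank F ↥((U : Submodule F L) ⊓ (V : Submodule F L)) := by omega
    have hWltU : ((U : Submodule F L) ⊓ (V : Submodule F L)) < (U : Submodule F L) := by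
      refine lt_of_le_of_ne inf_le_left ?_
      intro h
      exact hx ((inf_le_right : (U : Submodule F L) ⊓ (V : Submodule F L) ≤ _) (h.ge hxU))
    have hWfr : finrank F ↥((U : Submodule F L) ⊓ (V : Submodule F L)) = 1 := by
      have := Submodule.finrank_lt_finrank_of_lt hWltU
      omega
    have hWne : ((U : Submodule F L) ⊓ (V : Submodule F L)) ≠ ⊥ := by
      intro h
      rw [h, finrank_bot] at hWfr
      omega
    obtain ⟨v, hvW, hv0⟩ := Submodule.exists_mem_ne_zero_of_ne_bot hWne
    have hvU : v ∈ (U : Submodule F L) := (inf_le_left : _ ⊓ (V : Submodule F L) ≤ _) hvW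
    have hvV : v ∈ V := (inf_le_right : (U : Submodule F L) ⊓ _ ≤ _) hvW
    have hspan : Submodule.span F {v} = ((U : Submodule F L) ⊓ (V : Submodule F L)) :=
      Submodule.eq_of_le_of_finrank_eq
        ((Submodule.span_singleton_le_iff_mem _ _).mpr hvW)
        (by rw [finrank_span_singleton hv0, hWfr])
    have hlieW : ⁅x, v⁆ ∈ ((U : Submodule F L) ⊓ (V : Submodule F L)) :=
      Submodule.mem_inf.mpr ⟨U.lie_mem hxU hvU, V.lie_mem hvV⟩
    obtain ⟨c, hc⟩ := Submodule.mem_span_singleton.mp (hspan ▸ hlieW)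
    refine ⟨v, hvV, hv0, ⟨c, hc.symm⟩, ?_⟩
    have hx0 : x ≠ 0 := by rintro rfl; exact hx V.zero_mem
    have hdisj : Submodule.span F {x} ⊓ Submodule.span F {v} = ⊥ := by
      rw [Submodule.eq_bot_iff]
      rintro w ⟨hw1, hw2⟩
      obtain ⟨a, rfl⟩ := Submodule.mem_span_singleton.mp hw1
      by_contra hne
      have ha : a ≠ 0 := by rintro rfl; simp at hne
      have hxv : a • x ∈ (V : Submodule F L) :=
        ((Submodule.span_singleton_le_iff_mem _ _).mpr hvV) hw2
      have : x ∈ (V : Submodule F L) := by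
        have := Submodule.smul_mem _ a⁻¹ hxv
        rwa [smul_smul, inv_mul_cancel₀ ha, one_smul] at this
      exact hx this
    have hsup := Submodule.finrank_sup_add_finrank_inf_eq
      (Submodule.span F {x}) (Submodule.span F (M := L) {v})
    rw [hdisj, finrank_bot, finrank_span_singleton hx0, finrank_span_singleton hv0] at hsup
    refine (Submodule.eq_of_le_of_finrank_eq ?_ ?_).symm
    · exact sup_le ((Submodule.span_singleton_le_iff_mem _ _).mpr hxU)
        ((Submodule.span_singleton_le_iff_mem _ _).mpr hvU)
    · omega
  · -- Part 2
    intro U hU2 hUV hxU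
    have hUfr : finrank F (U : Submodule F L) = 2 := hU2
    have hsum := Submodule.finrank_sup_add_finrank_inf_eq (U : Submodule F L) (V : Submodule F L)
    have hle : finrank F ↥((U : Submodule F L) ⊔ (V : Submodule F L)) ≤ 3 :=
      hdim ▸ Submodule.finrank_le _
    have hW1 : 1 ≤ finrank F ↥((U : Submodule F L) ⊓ (V : Submodule F L)) := by omega
    have hWle : finrank F ↥((U : Submodule F L) ⊓ (V : Submodule F L)) ≤ 2 := by
      have := Submodule.finrank_mono
        (inf_le_left : (U : Submodule F L) ⊓ (V : Submodule F L) ≤ (U : Submodule F L))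
      omega
    have hWfr : finrank F ↥((U : Submodule F L) ⊓ (V : Submodule F L)) = 1 := by
      rcases Nat.lt_or_ge (finrank F ↥((U : Submodule F L) ⊓ (V : Submodule F L))) 2 with h | h
      · omega
      · exfalso
        have hWU : ((U : Submodule F L) ⊓ (V : Submodule F L)) = (U : Submodule F L) :=
          Submodule.eq_of_le_of_finrank_eq inf_le_left (by omega)
        have hWV : ((U : Submodule F L) ⊓ (V : Submodule F L)) = (V : Submodule F L) :=
          Submodule.eq_of_le_of_finrank_eq inf_le_right (by omega)
        exact hUV (hWU ▸ hWV)
    have hWne : ((U : Submodule F L) ⊓ (V : Submodule F L)) ≠ ⊥ := by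
      intro h
      rw [h, finrank_bot] at hWfr
      omega
    obtain ⟨v, hvW, hv0⟩ := Submodule.exists_mem_ne_zero_of_ne_bot hWne
    have hvU : v ∈ (U : Submodule F L) := (inf_le_left : _ ⊓ (V : Submodule F L) ≤ _) hvW
    have hvV : v ∈ V := (inf_le_right : (U : Submodule F L) ⊓ _ ≤ _) hvW
    have hspan : Submodule.span F {v} = ((U : Submodule F L) ⊓ (V : Submodule F L)) :=
      Submodule.eq_of_le_of_finrank_eq
        ((Submodule.span_singleton_le_iff_mem _ _).mpr hvW)
        (by rw [finrank_span_singleton hv0, hWfr])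
    -- pick u ∈ U \ V
    have hUnleV : ¬ (U : Submodule F L) ≤ (V : Submodule F L) := by
      intro h
      exact hUV (Submodule.eq_of_le_of_finrank_eq h (by omega))
    obtain ⟨u, huU, huV⟩ := SetLike.not_le_iff_exists.mp hUnleV
    have hu_top : u ∈ Submodule.span F {x} ⊔ (V : Submodule F L) := by
      rw [hdecomp]; trivial
    obtain ⟨y, hy, w, hwV, hyw⟩ := Submodule.mem_sup.mp hu_top
    obtain ⟨a, rfl⟩ := Submodule.mem_span_singleton.mp hy
    have ha : a ≠ 0 := by
      rintro rfl
      rw [zero_smul, zero_add] at hyw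
      exact huV (hyw ▸ hwV)
    have hlieW : ⁅u, v⁆ ∈ ((U : Submodule F L) ⊓ (V : Submodule F L)) :=
      Submodule.mem_inf.mpr ⟨U.lie_mem huU hvU, V.lie_mem hvV⟩
    obtain ⟨c, hc⟩ := Submodule.mem_span_singleton.mp (hspan ▸ hlieW)
    have hcomp : ⁅u, v⁆ = a • ⁅x, v⁆ := by
      rw [← hyw, add_lie, smul_lie, hVab w hwV v hvV, add_zero]
    refine ⟨v, hvV, hvU, hv0, a⁻¹ * c, ?_⟩
    have hav : a • ⁅x, v⁆ = c • v := by rw [← hcomp, ← hc]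
    calc ⁅x, v⁆ = a⁻¹ • (a • ⁅x, v⁆) := by
          rw [smul_smul, inv_mul_cancel₀ ha, one_smul]
      _ = a⁻¹ • (c • v) := by rw [hav]
      _ = (a⁻¹ * c) • v := by rw [smul_smul]
end

section
/- Let L = sl₂(F) over a field F of characteristic not 2, with standard basis h, x, y ([h,x]=2x, [h,y]=−2y, [x,y]=h). Then the two-dimensional Lie subalgebras of L are exactly B = Fx + Fh and B(α) = F(h + αx) + F(y + (α²/4)x) for α ∈ F. In particular, over F_q (q odd) there are exactly q+1 two-dimensional subalgebras. -/
/-!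
A two-dimensional subalgebra `U` not equal to `Fx + Fh` contains some `u = y + r x + s h`. Then
`x ∉ U`, for otherwise `[x, u] = h - 2s x` puts `h`, and then `y`, into `U`. Counting dimensions,
`U` meets `Fx + Fh` nontrivially, and since `x ∉ U` this intersection contains some `w = h + β x`.
The combination `[u, w] - 2u + (β + 2s) w = (β² + 4sβ - 4r) x` lies in `U`, which forces
`r = sβ + β²/4`, so `u - s w = y + (β²/4) x` and `U = B(β)`. The subalgebras `B` and `B(α)` are
pairwise distinct, hence there are `q + 1` of them over `F_q`.
-/

open Module Submodule Function

theorem four_ne_zero_of_two_ne_zero {R : Type*} [Semiring R] [NoZeroDivisors R]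
    (h2 : (2 : R) ≠ 0) : (4 : R) ≠ 0 := by
  simpa [← two_add_two_eq_four, ← two_mul] using mul_ne_zero h2 h2

section LinearAlgebra

variable {K V : Type*} [Field K] [AddCommGroup V] [Module K V]

theorem finrank_span_pair_eq_two {v w : V} (hvw : LinearIndependent K ![v, w]) :
    finrank K (span K {v, w}) = 2 := by
  rw [← Matrix.range_cons_cons_empty, finrank_span_eq_card hvw, Fintype.card_fin]

theorem linearIndependent_pair_of_mem_of_notMem {S : Submodule K V} {v w : V} (hv : v ∈ S)
    (hv₀ : v ≠ 0) (hw : w ∉ S) : LinearIndependent K ![v, w] :=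
  (LinearIndependent.pair_iff' hv₀).2 fun a ha => hw (ha ▸ S.smul_mem a hv)

theorem Submodule.exists_add_mem_of_not_le {S U : Submodule K V} {y : V}
    (hy : span K {y} ⊔ S = ⊤) (hUS : ¬U ≤ S) : ∃ s ∈ S, y + s ∈ U := by
  obtain ⟨v, hvU, hvS⟩ := SetLike.not_le_iff_exists.mp hUS
  obtain ⟨_, hcy, s, hs, rfl⟩ := mem_sup.mp (hy ▸ mem_top : v ∈ span K {y} ⊔ S)
  obtain ⟨c, rfl⟩ := mem_span_singleton.mp hcy
  have hc : c ≠ 0 := by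
    rintro rfl
    exact hvS (by simpa using hs)
  refine ⟨c⁻¹ • s, S.smul_mem _ hs, ?_⟩
  simpa [smul_add, smul_smul, hc] using U.smul_mem c⁻¹ hvU

theorem Submodule.exists_mem_inf_ne_zero [FiniteDimensional K V] {S U : Submodule K V}
    (h : finrank K V < finrank K U + finrank K S) : ∃ w ∈ U ⊓ S, w ≠ 0 := by
  refine exists_mem_ne_zero_of_ne_bot fun hbot => ?_
  have hdim := finrank_sup_add_finrank_inf_eq U S
  rw [hbot, finrank_bot] at hdim
  have := (U ⊔ S).finrank_le
  omega

end LinearAlgebra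

section Lie

variable {R L : Type*} [CommRing R] [LieRing L] [LieAlgebra R L]

theorem exists_lieSubalgebra_eq_span_pair {a b : L} (hab : ⁅a, b⁆ ∈ span R {a, b}) :
    ∃ K : LieSubalgebra R L, (K : Submodule R L) = span R {a, b} := by
  refine ⟨{ span R {a, b} with lie_mem' := fun {u v} hu hv => ?_ }, rfl⟩
  obtain ⟨s, t, rfl⟩ := mem_span_pair.mp hu
  obtain ⟨s', t', rfl⟩ := mem_span_pair.mp hv
  have key : ⁅s • a + t • b, s' • a + t' • b⁆ = (s * t' - t * s') • ⁅a, b⁆ := by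
    simp only [add_lie, lie_add, smul_lie, lie_smul, lie_self, smul_zero, zero_add, add_zero]
    rw [← lie_skew a b]
    module
  rw [key]
  exact smul_mem _ _ hab

theorem LieSubalgebra.natCard_eq_of_iff_exists_eq {ι : Type*} {g : ι → Submodule R L}
    (hg : Injective g) (hlie : ∀ i, ∃ K : LieSubalgebra R L, (K : Submodule R L) = g i)
    {P : LieSubalgebra R L → Prop} (hP : ∀ U, P U ↔ ∃ i, (U : Submodule R L) = g i) :
    Nat.card {U // P U} = Nat.card ι := by
  let toRange : {U // P U} → Set.range g := fun U =>
    ⟨U.1, by obtain ⟨i, hi⟩ := (hP U.1).1 U.2; exact ⟨i, hi.symm⟩⟩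
  have hbij : Bijective toRange := by
    refine ⟨fun U V hUV => Subtype.ext (LieSubalgebra.toSubmodule_injective ?_), ?_⟩
    · exact congrArg Subtype.val hUV
    · rintro ⟨_, i, rfl⟩
      obtain ⟨K, hK⟩ := hlie i
      exact ⟨⟨K, (hP K).2 ⟨i, hK⟩⟩, Subtype.ext hK⟩
  rw [Nat.card_eq_of_bijective toRange hbij, Nat.card_range_of_injective hg]

end Lie

section Sl2

variable {F : Type*} [Field F] {L : Type*} [LieRing L] [LieAlgebra F L] {x y h : L}

/-- `none` gives `B = Fx + Fh` and `some α` gives `B(α)`, so the subalgebras are indexed by the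
projective line `F ∪ {∞}`. -/
def sl2BorelSubspace (x y h : L) : Option F → Submodule F L
  | none => span F {x, h}
  | some α => span F {h + α • x, y + (α ^ 2 / 4) • x}

instance (o : Option F) : FiniteDimensional F (sl2BorelSubspace x y h o) := by
  cases o <;> exact FiniteDimensional.span_of_finite F (Set.toFinite _)

theorem y_add_smul_x_notMem_span (hy : y ∉ span F {x, h}) (c : F) :
    y + c • x ∉ span F {x, h} := fun hmem =>
  hy ((add_mem_cancel_right (smul_mem _ c (subset_span (Set.mem_insert x _)))).mp hmem)

theorem finrank_sl2BorelSubspace (hxh : LinearIndependent F ![x, h]) (hy : y ∉ span F {x, h}) :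
    ∀ o : Option F, finrank F (sl2BorelSubspace x y h o) = 2
  | none => finrank_span_pair_eq_two hxh
  | some α => by
    refine finrank_span_pair_eq_two (linearIndependent_pair_of_mem_of_notMem (S := span F {x, h})
      ?_ ?_ (y_add_smul_x_notMem_span hy _))
    · exact add_mem (subset_span (by simp)) (smul_mem _ _ (subset_span (by simp)))
    · intro h0
      have := LinearIndependent.pair_iff.mp hxh α 1 (by rw [← h0]; module)
      exact one_ne_zero this.2

theorem sl2BorelSubspace_injective (hxh : LinearIndependent F ![x, h]) (hy : y ∉ span F {x, h}) :
    Injective (sl2BorelSubspace x y h : Option F → Submodule F L) := by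
  have hw (α : F) : h + α • x ∈ sl2BorelSubspace x y h (some α) := subset_span (Set.mem_insert _ _)
  have hne (α : F) : span F {x, h} ≠ sl2BorelSubspace x y h (some α) := fun hS =>
    y_add_smul_x_notMem_span hy (α ^ 2 / 4) (hS ▸ subset_span (Set.mem_insert_of_mem _ rfl))
  have hx (γ : F) : x ∉ sl2BorelSubspace x y h (some γ) := fun hx => by
    have hh : h ∈ sl2BorelSubspace x y h (some γ) := by simpa using sub_mem (hw γ) (smul_mem _ γ hx)
    refine hne γ (eq_of_le_of_finrank_eq (span_le.mpr ?_) ?_)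
    · rintro _ (rfl | rfl) <;> assumption
    · exact (finrank_sl2BorelSubspace hxh hy none).trans
        (finrank_sl2BorelSubspace hxh hy (some γ)).symm
  rintro (_ | α) (_ | γ) hαγ
  · rfl
  · exact absurd hαγ (hne γ)
  · exact absurd hαγ.symm (hne α)
  · by_contra hne'
    have hsub : (α - γ) • x ∈ sl2BorelSubspace x y h (some γ) := by
      rw [show (α - γ) • x = (h + α • x) - (h + γ • x) by module]
      exact sub_mem (hαγ ▸ hw α) (hw γ)
    exact hx γ ((smul_mem_iff _ (sub_ne_zero.mpr fun hαγ' => hne' (congrArg some hαγ'))).mp hsub)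

theorem exists_lieSubalgebra_eq_sl2BorelSubspace (hchar : (2 : F) ≠ 0)
    (hhx : ⁅h, x⁆ = (2 : F) • x) (hhy : ⁅h, y⁆ = -(2 : F) • y) (hxy : ⁅x, y⁆ = h) :
    ∀ o : Option F, ∃ K : LieSubalgebra F L, (K : Submodule F L) = sl2BorelSubspace x y h o
  | none => exists_lieSubalgebra_eq_span_pair <| by
    rw [← lie_skew, hhx, ← neg_smul]
    exact smul_mem _ _ (subset_span (Set.mem_insert _ _))
  | some α => exists_lieSubalgebra_eq_span_pair <| by
    have := four_ne_zero_of_two_ne_zero hchar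
    have hbr : ⁅h + α • x, y + (α ^ 2 / 4) • x⁆ =
        α • (h + α • x) + (-2 : F) • (y + (α ^ 2 / 4) • x) := by
      simp only [lie_add, add_lie, smul_lie, lie_smul, lie_self, smul_zero, add_zero, hhx, hhy,
        hxy]
      match_scalars <;> field_simp
      ring
    rw [hbr]
    exact add_mem (smul_mem _ _ (subset_span (Set.mem_insert _ _)))
      (smul_mem _ _ (subset_span (Set.mem_insert_of_mem _ rfl)))

theorem x_notMem_of_finrank_eq_two (hspan : span F {x, y, h} = ⊤) (hdim : finrank F L = 3)
    (hhx : ⁅h, x⁆ = (2 : F) • x) (hxy : ⁅x, y⁆ = h) {U : LieSubalgebra F L}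
    (hU : finrank F U = 2) {r s : F} (hu : y + (r • x + s • h) ∈ U) : x ∉ U := by
  intro hx
  have hh : h ∈ U := by
    have hbr : ⁅x, y + (r • x + s • h)⁆ = h - (2 * s) • x := by
      rw [lie_add, lie_add, lie_smul, lie_smul, lie_self, ← lie_skew x h, hhx, hxy]
      module
    simpa [hbr] using add_mem (U.lie_mem hx hu) (U.smul_mem (2 * s) hx)
  have hy : y ∈ U := by
    simpa using sub_mem hu (add_mem (U.smul_mem r hx) (U.smul_mem s hh))
  have htop : (U : Submodule F L) = ⊤ := by
    rw [eq_top_iff, ← hspan, span_le]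
    rintro _ (rfl | rfl | rfl) <;> assumption
  have : finrank F U = finrank F L := by
    rw [show finrank F U = finrank F (U : Submodule F L) from rfl, htop, finrank_top]
  omega

theorem exists_h_add_smul_x_mem (hxh : LinearIndependent F ![x, h]) (hdim : finrank F L = 3)
    {U : LieSubalgebra F L} (hU : finrank F U = 2) (hx : x ∉ U) : ∃ β : F, h + β • x ∈ U := by
  have : FiniteDimensional F L := Module.finite_of_finrank_eq_succ hdim
  have hsum : finrank F L < finrank F U + finrank F (span F {x, h}) := by
    rw [finrank_span_pair_eq_two hxh, hdim, hU]
    norm_num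
  obtain ⟨w, ⟨hwU, hwS⟩, hw₀⟩ := exists_mem_inf_ne_zero (U := (U : Submodule F L)) hsum
  obtain ⟨p, q, rfl⟩ := mem_span_pair.mp hwS
  have hq : q ≠ 0 := by
    rintro rfl
    have hp : p ≠ 0 := by rintro rfl; simp at hw₀
    exact hx ((U.toSubmodule.smul_mem_iff hp).mp (by simpa using hwU))
  refine ⟨q⁻¹ * p, ?_⟩
  convert U.smul_mem q⁻¹ hwU using 1
  rw [smul_add, smul_smul, smul_smul, inv_mul_cancel₀ hq, one_smul, add_comm]

theorem eq_mul_add_sq_div_four_of_x_notMem (hchar : (2 : F) ≠ 0)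
    (hhx : ⁅h, x⁆ = (2 : F) • x) (hhy : ⁅h, y⁆ = -(2 : F) • y) (hxy : ⁅x, y⁆ = h)
    {U : LieSubalgebra F L} (hx : x ∉ U) {r s β : F} (hu : y + (r • x + s • h) ∈ U)
    (hw : h + β • x ∈ U) : r = s * β + β ^ 2 / 4 := by
  have hbr : ⁅y + (r • x + s • h), h + β • x⁆ - (2 : F) • (y + (r • x + s • h)) +
      (β + 2 * s) • (h + β • x) = (β ^ 2 + 4 * s * β - 4 * r) • x := by
    simp only [lie_add, add_lie, smul_lie, lie_smul, lie_self, smul_zero, add_zero, zero_add]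
    rw [← lie_skew y h, ← lie_skew y x, ← lie_skew x h, hhx, hhy, hxy]
    module
  have hmem : (β ^ 2 + 4 * s * β - 4 * r) • x ∈ U :=
    hbr ▸ add_mem (sub_mem (U.lie_mem hu hw) (U.smul_mem 2 hu)) (U.smul_mem _ hw)
  have hzero : β ^ 2 + 4 * s * β - 4 * r = 0 := by
    by_contra hne
    exact hx ((U.toSubmodule.smul_mem_iff hne).mp hmem)
  have := four_ne_zero_of_two_ne_zero hchar
  field_simp
  linear_combination -hzero

theorem exists_eq_sl2BorelSubspace_of_finrank_eq_two (hchar : (2 : F) ≠ 0)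
    (hspan : span F {x, y, h} = ⊤) (hdim : finrank F L = 3)
    (hhx : ⁅h, x⁆ = (2 : F) • x) (hhy : ⁅h, y⁆ = -(2 : F) • y) (hxy : ⁅x, y⁆ = h)
    (hxh : LinearIndependent F ![x, h]) (hy : y ∉ span F {x, h})
    {U : LieSubalgebra F L} (hU : finrank F U = 2) :
    ∃ o : Option F, (U : Submodule F L) = sl2BorelSubspace x y h o := by
  by_cases hUS : (U : Submodule F L) ≤ span F {x, h}
  · exact ⟨none, eq_of_le_of_finrank_eq hUS (hU.trans (finrank_span_pair_eq_two hxh).symm)⟩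
  obtain ⟨_, hs₀, hu⟩ := exists_add_mem_of_not_le (y := y)
    (by rw [← span_insert, Set.insert_comm, hspan]) hUS
  obtain ⟨r, s, rfl⟩ := mem_span_pair.mp hs₀
  have hx := x_notMem_of_finrank_eq_two hspan hdim hhx hxy hU hu
  obtain ⟨β, hw⟩ := exists_h_add_smul_x_mem hxh hdim hU hx
  have hr := eq_mul_add_sq_div_four_of_x_notMem hchar hhx hhy hxy hx hu hw
  have : FiniteDimensional F (U : Submodule F L) := Module.finite_of_finrank_eq_succ hU
  refine ⟨some β, (eq_of_le_of_finrank_eq (span_le.mpr ?_) ?_).symm⟩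
  · rintro _ (rfl | rfl)
    · exact hw
    · rw [show y + (β ^ 2 / 4) • x = y + (r • x + s • h) - s • (h + β • x) by rw [hr]; module]
      exact sub_mem hu (U.smul_mem s hw)
  · exact (finrank_sl2BorelSubspace hxh hy (some β)).trans hU.symm

end Sl2

/-- For `L = sl₂(F)` over a field of characteristic ≠ 2 (standard basis
`h, x, y` with `[h,x] = 2x`, `[h,y] = −2y`, `[x,y] = h`), the two-dimensional
Lie subalgebras are exactly `B = Fx + Fh` and
`B(α) = F(h + αx) + F(y + (α²/4)x)` for `α ∈ F`; in particular over `F_q`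
(`q` odd) there are exactly `q+1` of them. -/
theorem sl2_two_dim_subalgebras
    (F : Type*) [Field F] (hchar : (2 : F) ≠ 0)
    (L : Type*) [LieRing L] [LieAlgebra F L]
    (x y h : L) (hspan : Submodule.span F {x, y, h} = ⊤)
    (hdim : finrank F L = 3)
    (hhx : ⁅h, x⁆ = (2 : F) • x) (hhy : ⁅h, y⁆ = -(2 : F) • y)
    (hxy : ⁅x, y⁆ = h) :
    (∀ U : LieSubalgebra F L, finrank F U = 2 ↔
        ((U : Submodule F L) = Submodule.span F {x, h} ∨
          ∃ α : F, (U : Submodule F L) =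
            Submodule.span F {h + α • x, y + (α ^ 2 / 4) • x})) ∧
    (∀ q : ℕ, Odd q → Nat.card F = q →
        Nat.card {U : LieSubalgebra F L // finrank F U = 2} = q + 1) := by
  have hrange : Set.range ![y, x, h] = {x, y, h} := by
    rw [Set.insert_comm x y]
    simp only [Matrix.range_cons, Matrix.range_empty, Set.union_empty, Set.singleton_union]
  have hli : LinearIndependent F ![y, x, h] :=
    linearIndependent_of_top_le_span_of_card_eq_finrank (by rw [hrange, hspan])
      (by rw [Fintype.card_fin, hdim])
  obtain ⟨hxh, hy⟩ := linearIndependent_finCons.mp hli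
  rw [Matrix.range_cons_cons_empty] at hy
  have hclass (U : LieSubalgebra F L) :
      finrank F U = 2 ↔ ∃ o : Option F, (U : Submodule F L) = sl2BorelSubspace x y h o :=
    ⟨exists_eq_sl2BorelSubspace_of_finrank_eq_two hchar hspan hdim hhx hhy hxy hxh hy,
      fun ⟨o, hU⟩ => (congrArg (fun S : Submodule F L => finrank F S) hU).trans
        (finrank_sl2BorelSubspace hxh hy o)⟩
  refine ⟨fun U => (hclass U).trans Option.exists, fun q hq hcard => ?_⟩
  have : Finite F := Nat.finite_of_card_ne_zero (hcard ▸ hq.pos.ne')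
  rw [LieSubalgebra.natCard_eq_of_iff_exists_eq (sl2BorelSubspace_injective hxh hy)
    (exists_lieSubalgebra_eq_sl2BorelSubspace hchar hhx hhy hxy) hclass, Finite.card_option, hcard]
end
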